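/- arXiv:1604.06906 — 7 statements merged into one kernel-verified Lean document; each statement's English description precedes it below -/
import Mathlib

section
/- Let T = diag(t_1,…,t_p) with t_j ≥ 0, let Z = diag(z_1,…,z_p) with z_j = (1 + w_j^{-2} t_j)^{-1} for a nonsingular diagonal W = diag(w_1,…,w_p), and let R = W^{-2} + a aᵀ be nonsingular with b = W a and U = I_p − Z. Then T (I_p + R T)^{-1} = T Z (I_p − (1 + bᵀ U b)^{-1} W^{-1} b bᵀ W^{-1} T Z), provided 1 + bᵀ U b ≠ 0. -/
/-!
Since `T Z (I + W⁻² T) = T`, the claim is a Sherman–Morrison update of this one-sided inverse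
by the rank-one term `a aᵀ T`. The data in the statement are that update in disguise:
`W⁻¹ b bᵀ W⁻¹ = a aᵀ`, and `w_j² (1 - z_j) = t_j z_j` turns `bᵀ U b` into `aᵀ T Z a`.
-/

open Matrix

theorem vecMulVec_mulVec_mulVec {n R : Type*} [Fintype n] [CommSemiring R] (W : Matrix n n R)
    (u v : n → R) : vecMulVec (W *ᵥ u) (W *ᵥ v) = W * vecMulVec u v * Wᵀ := by
  rw [mul_vecMulVec, vecMulVec_mul, vecMul_transpose]

theorem vecMulVec_mul_mul_vecMulVec {n R : Type*} [Fintype n] [CommSemiring R] (u v : n → R)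
    (P : Matrix n n R) : vecMulVec u v * P * vecMulVec u v = (v ⬝ᵥ P *ᵥ u) • vecMulVec u v := by
  rw [vecMulVec_mul, vecMulVec_mul_vecMulVec, vecMulVec_smul, dotProduct_mulVec]

variable {n K : Type*} [Fintype n] [DecidableEq n] [Field K]

/-- If `P` is a left inverse of `M` on `T`, then so is its Sherman–Morrison update
for `M + u vᵀ T`. -/
theorem mul_sherman_morrison_mul_add_vecMulVec_mul {T P M : Matrix n n K} (u v : n → K)
    (hPM : P * M = T) (hc : 1 + v ⬝ᵥ P *ᵥ u ≠ 0) :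
    P * (1 - (1 + v ⬝ᵥ P *ᵥ u)⁻¹ • (vecMulVec u v * P)) * (M + vecMulVec u v * T) = T := by
  set s := v ⬝ᵥ P *ᵥ u
  set N := vecMulVec u v
  have hNPN : N * P * N = s • N := vecMulVec_mul_mul_vecMulVec u v P
  have hcoeff : 1 - (1 + s)⁻¹ - (1 + s)⁻¹ * s = 0 := by
    field_simp
    ring
  calc P * (1 - (1 + s)⁻¹ • (N * P)) * (M + N * T)
      = P * M + P * N * T - (1 + s)⁻¹ • (P * N * (P * M))
          - (1 + s)⁻¹ • (P * (N * P * N) * T) := by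
        simp only [Matrix.mul_sub, Matrix.sub_mul, Matrix.mul_add, Matrix.mul_one,
          Matrix.mul_smul, Matrix.smul_mul, Matrix.mul_assoc]
        abel
    _ = T + (1 - (1 + s)⁻¹ - (1 + s)⁻¹ * s) • (P * N * T) := by
        rw [hPM, hNPN, Matrix.mul_smul, Matrix.smul_mul, smul_smul]
        simp only [sub_smul, one_smul]
        abel
    _ = T := by rw [hcoeff, zero_smul, add_zero]

theorem diagonal_mul_diagonal_inv_mul_one_add_diagonal_mul (d t : n → K)
    (h : ∀ j, 1 + d j * t j ≠ 0) :
    diagonal t * diagonal (fun j => (1 + d j * t j)⁻¹) * (1 + diagonal d * diagonal t) =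
      diagonal t := by
  rw [← diagonal_one, diagonal_mul_diagonal d t, diagonal_add, diagonal_mul_diagonal,
    diagonal_mul_diagonal]
  congr 1
  ext j
  rw [mul_assoc, inv_mul_cancel₀ (h j), mul_one]

theorem inv_mul_vecMulVec_mulVec_mul_inv {W : Matrix n n K} (hW : IsUnit W.det)
    (hWt : Wᵀ = W) (u v : n → K) :
    W⁻¹ * vecMulVec (W *ᵥ u) (W *ᵥ v) * W⁻¹ = vecMulVec u v := by
  rw [vecMulVec_mulVec_mulVec, hWt, Matrix.mul_assoc W, nonsing_inv_mul_cancel_left _ _ hW,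
    mul_nonsing_inv_cancel_right _ _ hW]

/-- With `z_j = (1 + w_j⁻² t_j)⁻¹` one has `w_j² (1 - z_j) = t_j z_j`. -/
theorem diagonal_mulVec_dotProduct_one_sub_diagonal_mulVec (w t a : n → K)
    (hw : ∀ j, w j ≠ 0) (h : ∀ j, 1 + (w j)⁻¹ ^ 2 * t j ≠ 0) :
    diagonal w *ᵥ a ⬝ᵥ (1 - diagonal fun j => (1 + (w j)⁻¹ ^ 2 * t j)⁻¹) *ᵥ (diagonal w *ᵥ a) =
      a ⬝ᵥ (diagonal t * diagonal fun j => (1 + (w j)⁻¹ ^ 2 * t j)⁻¹) *ᵥ a := by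
  rw [← diagonal_one, diagonal_sub, diagonal_mul_diagonal]
  simp only [mulVec_diagonal, dotProduct]
  refine Finset.sum_congr rfl fun j _ => ?_
  have hwj := hw j
  have hj : w j ^ 2 + t j ≠ 0 := by
    have := h j
    field_simp at this
    exact (div_ne_zero_iff.mp this).1
  field_simp
  ring

theorem stmt1_general {p : ℕ} (w t : Fin p → ℝ) (hw : ∀ j, w j ≠ 0) (ht : ∀ j, 0 ≤ t j)
    (a : Fin p → ℝ)
    (W T Z U R : Matrix (Fin p) (Fin p) ℝ)
    (hW : W = Matrix.diagonal w)
    (hT : T = Matrix.diagonal t)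
    (hZ : Z = Matrix.diagonal fun j => (1 + ((w j)⁻¹ ^ 2) * t j)⁻¹)
    (hU : U = 1 - Z)
    (hR : R = (Matrix.diagonal fun j => (w j)⁻¹ ^ 2) + Matrix.vecMulVec a a)
    (hIRT : IsUnit (1 + R * T).det)
    (b : Fin p → ℝ) (hb : b = W.mulVec a)
    (hq : 1 + b ⬝ᵥ U.mulVec b ≠ 0) :
    T * (1 + R * T)⁻¹ =
      T * Z * (1 - (1 + b ⬝ᵥ U.mulVec b)⁻¹ •
        (W⁻¹ * Matrix.vecMulVec b b * W⁻¹ * T * Z)) := by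
  subst hW hT hZ hU hR hb
  have hden : ∀ j, 1 + (w j)⁻¹ ^ 2 * t j ≠ 0 := fun j => by
    have := ht j
    positivity
  have hWdet : IsUnit (diagonal w).det := by
    rw [det_diagonal]
    exact (Finset.prod_ne_zero_iff.mpr fun j _ => hw j).isUnit
  rw [diagonal_mulVec_dotProduct_one_sub_diagonal_mulVec w t a hw hden] at hq ⊢
  rw [inv_mul_vecMulVec_mulVec_mul_inv hWdet (diagonal_transpose w),
    Matrix.mul_assoc _ (diagonal t)]
  have := invertibleOfIsUnitDet _ hIRT
  rw [mul_inv_eq_iff_eq_mul_of_invertible, add_mul, ← add_assoc]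
  exact (mul_sherman_morrison_mul_add_vecMulVec_mul a a
    (diagonal_mul_diagonal_inv_mul_one_add_diagonal_mul _ t hden) hq).symm

theorem stmt1 {p : ℕ} (w t : Fin p → ℝ) (hw : ∀ j, w j ≠ 0) (ht : ∀ j, 0 ≤ t j)
    (a : Fin p → ℝ)
    (W T Z U R : Matrix (Fin p) (Fin p) ℝ)
    (hW : W = Matrix.diagonal w)
    (hT : T = Matrix.diagonal t)
    (hZ : Z = Matrix.diagonal fun j => (1 + ((w j)⁻¹ ^ 2) * t j)⁻¹)
    (hU : U = 1 - Z)
    (hR : R = (Matrix.diagonal fun j => (w j)⁻¹ ^ 2) + Matrix.vecMulVec a a)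
    (hRns : IsUnit R.det)
    (hIRT : IsUnit (1 + R * T).det)
    (b : Fin p → ℝ) (hb : b = W.mulVec a)
    (hq : 1 + b ⬝ᵥ U.mulVec b ≠ 0) :
    T * (1 + R * T)⁻¹ =
      T * Z * (1 - (1 + b ⬝ᵥ U.mulVec b)⁻¹ •
        (W⁻¹ * Matrix.vecMulVec b b * W⁻¹ * T * Z)) :=
  stmt1_general w t hw ht a W T Z U R hW hT hZ hU hR hIRT b hb hq
end

section
/- With R = W^{-2} + a aᵀ nonsingular, b = W a, Δ a positive semidefinite p×p matrix, D = R^{-1} Δ R^{-1}, Z a diagonal matrix, U = I_p − Z, and β = 1 + bᵀ b ≠ 0, the identity −aᵀ D a − tr(W^{-1} D W^{-1} U) + (aᵀ Z D Z a)/(1 + bᵀ U b) = −tr(W Δ W U) + (bᵀ U W Δ W U b)/(1 + bᵀ U b) holds, provided 1 + bᵀ U b ≠ 0. -/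
open Matrix

section helpers
variable {p : ℕ}

lemma vecMulVec_mul' (u v : Fin p → ℝ) (A : Matrix (Fin p) (Fin p) ℝ) :
    vecMulVec u v * A = vecMulVec u (v ᵥ* A) := by
  ext i j
  simp [vecMulVec_apply, mul_apply, vecMul, dotProduct, Finset.mul_sum, mul_assoc]

lemma mul_vecMulVec' (A : Matrix (Fin p) (Fin p) ℝ) (u v : Fin p → ℝ) :
    A * vecMulVec u v = vecMulVec (A *ᵥ u) v := by
  ext i j
  simp [vecMulVec_apply, mul_apply, mulVec, dotProduct, Finset.sum_mul, mul_assoc]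

lemma trace_vecMulVec' (u v : Fin p → ℝ) : (vecMulVec u v).trace = u ⬝ᵥ v := by
  simp [Matrix.trace, vecMulVec_apply, dotProduct, Matrix.diag]

lemma vecMulVec_mulVec' (u v x : Fin p → ℝ) :
    (vecMulVec u v) *ᵥ x = (v ⬝ᵥ x) • u := by
  funext i
  simp only [mulVec, vecMulVec_apply, dotProduct, Pi.smul_apply, smul_eq_mul,
    Finset.sum_mul]
  exact Finset.sum_congr rfl fun k _ => by ring

lemma smul_vecMulVec' (r : ℝ) (u v : Fin p → ℝ) :
    vecMulVec (r • u) v = r • vecMulVec u v := by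
  ext i j; simp [vecMulVec_apply, mul_assoc]

end helpers

theorem stmt2 {p : ℕ} (w z : Fin p → ℝ) (hw : ∀ j, w j ≠ 0) (a : Fin p → ℝ)
    (W Z U R Δ D : Matrix (Fin p) (Fin p) ℝ)
    (hW : W = Matrix.diagonal w)
    (hZ : Z = Matrix.diagonal z)
    (hU : U = 1 - Z)
    (hR : R = (Matrix.diagonal fun j => (w j)⁻¹ ^ 2) + Matrix.vecMulVec a a)
    (hRns : IsUnit R.det)
    (hΔ : Δ.IsSymm)
    (hD : D = R⁻¹ * Δ * R⁻¹)
    (b : Fin p → ℝ) (hb : b = W.mulVec a)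
    (hβ : 1 + b ⬝ᵥ b ≠ 0)
    (hq : 1 + b ⬝ᵥ U.mulVec b ≠ 0) :
    -(a ⬝ᵥ D.mulVec a) - (W⁻¹ * D * W⁻¹ * U).trace
        + (a ⬝ᵥ (Z * D * Z).mulVec a) / (1 + b ⬝ᵥ U.mulVec b) =
      -((W * Δ * W * U).trace)
        + (b ⬝ᵥ (U * W * Δ * W * U).mulVec b) / (1 + b ⬝ᵥ U.mulVec b) := by
  set Winv : Matrix (Fin p) (Fin p) ℝ := Matrix.diagonal (fun j => (w j)⁻¹) with hWinvdef
  have hW1 : Winv * W = 1 := by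
    rw [hWinvdef, hW, diagonal_mul_diagonal]
    have h : (fun j => (w j)⁻¹ * w j) = fun _ => (1:ℝ) := funext fun j => inv_mul_cancel₀ (hw j)
    rw [h, Matrix.diagonal_one]
  have hW2 : W * Winv = 1 := mul_eq_one_comm.mp hW1
  have hWinv : W⁻¹ = Winv := Matrix.inv_eq_left_inv hW1
  have hbj : ∀ j, b j = w j * a j := fun j => by rw [hb, hW]; simp [mulVec_diagonal]
  have hvaW : a ᵥ* W = b := funext fun j => by rw [hW, vecMul_diagonal, hbj j, mul_comm]
  have hWb : W *ᵥ a = b := hb.symm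
  have hWinvb : Winv *ᵥ b = a := funext fun j => by
    rw [hWinvdef, mulVec_diagonal, hbj j, ← mul_assoc, inv_mul_cancel₀ (hw j), one_mul]
  set κ : ℝ := (1 + b ⬝ᵥ b)⁻¹ with hκdef
  set E : Matrix (Fin p) (Fin p) ℝ := vecMulVec b b with hEdef
  set P : Matrix (Fin p) (Fin p) ℝ := 1 - κ • E with hPdef
  have hEE : E * E = (b ⬝ᵥ b) • E := by
    rw [hEdef, mul_vecMulVec', vecMulVec_mulVec', smul_vecMulVec']
  have hc : κ + κ * (b ⬝ᵥ b) = 1 := by rw [hκdef]; field_simp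
  have h1E : (1 + E) * P = 1 := by
    rw [hPdef, mul_sub, mul_one, add_mul, one_mul, mul_smul_comm, hEE, smul_smul,
      ← add_smul, hc, one_smul, add_sub_cancel_right]
  -- inverse of R
  have hRP : R * (W * P * W) = 1 := by
    have hdiag2 : (Matrix.diagonal fun j => (w j)⁻¹ ^ 2) = Winv * Winv := by
      have h : (fun j => (w j)⁻¹ ^ 2) = fun j => (w j)⁻¹ * (w j)⁻¹ := funext fun j => sq _
      rw [hWinvdef, diagonal_mul_diagonal, h]
    rw [hR, add_mul, hdiag2]
    have t1 : Winv * Winv * (W * P * W) = Winv * (P * W) := by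
      have h : Winv * Winv * (W * P * W) = Winv * ((Winv * W) * (P * W)) := by
        simp only [Matrix.mul_assoc]
      rw [h, hW1, one_mul]
    have t2 : vecMulVec a a * (W * P * W) = Winv * (E * (P * W)) := by
      have h3 : vecMulVec a a * W = vecMulVec a b := by rw [vecMulVec_mul', hvaW]
      have h4 : vecMulVec a b = Winv * E := by rw [hEdef, mul_vecMulVec', hWinvb]
      calc vecMulVec a a * (W * P * W) = (vecMulVec a a * W) * (P * W) := by
            simp only [Matrix.mul_assoc]
        _ = Winv * (E * (P * W)) := by rw [h3, h4, Matrix.mul_assoc]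
    rw [t1, t2, ← Matrix.mul_add]
    have h5 : P * W + E * (P * W) = ((1 + E) * P) * W := by
      rw [add_mul, one_mul, add_mul, Matrix.mul_assoc]
    rw [h5, h1E, one_mul, hW1]
  have hRinv : R⁻¹ = W * P * W := Matrix.inv_eq_right_inv hRP
  set M : Matrix (Fin p) (Fin p) ℝ := W * Δ * W with hMdef
  set NN : Matrix (Fin p) (Fin p) ℝ := P * M * P with hNNdef
  have hDN : D = W * NN * W := by
    rw [hD, hRinv, hNNdef, hMdef]; simp only [Matrix.mul_assoc]
  -- symmetry facts
  have hMsym : Mᵀ = M := by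
    rw [hMdef, Matrix.transpose_mul, Matrix.transpose_mul, hΔ.eq, hW, Matrix.diagonal_transpose,
      Matrix.mul_assoc]
  have hUsym : Uᵀ = U := by
    rw [hU, hZ, Matrix.transpose_sub, Matrix.transpose_one, Matrix.diagonal_transpose]
  have hS : ∀ x y : Fin p → ℝ, x ⬝ᵥ M *ᵥ y = y ⬝ᵥ M *ᵥ x := fun x y => by
    rw [dotProduct_mulVec x M y, ← mulVec_transpose, hMsym, dotProduct_comm]
  have hUvm : ∀ x : Fin p → ℝ, x ᵥ* U = U *ᵥ x := fun x => by
    conv_lhs => rw [← hUsym, vecMul_transpose]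
  set g : Fin p → ℝ := U *ᵥ b with hgdef
  set k : ℝ := b ⬝ᵥ b with hkdef
  set u₀ : ℝ := b ⬝ᵥ g with hu₀def
  set s1 : ℝ := b ⬝ᵥ M *ᵥ b with hs1def
  set s2 : ℝ := b ⬝ᵥ M *ᵥ g with hs2def
  set s3 : ℝ := g ⬝ᵥ M *ᵥ g with hs3def
  set t : ℝ := (W * Δ * W * U).trace with htdef
  have hs2' : g ⬝ᵥ M *ᵥ b = s2 := by rw [hs2def]; exact hS g b
  -- bilinear expansion
  have hbil : ∀ (x y : Fin p → ℝ) (r s : ℝ),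
      (x - r • b) ⬝ᵥ M *ᵥ (y - s • b)
        = x ⬝ᵥ M *ᵥ y - s * (x ⬝ᵥ M *ᵥ b) - r * (b ⬝ᵥ M *ᵥ y) + r * s * s1 := by
    intro x y r s
    rw [mulVec_sub, mulVec_smul, dotProduct_sub, sub_dotProduct, sub_dotProduct,
      dotProduct_smul, dotProduct_smul, smul_dotProduct, smul_dotProduct, hs1def]
    simp only [smul_eq_mul]
    ring
  -- action of P on vectors
  have hPmv : ∀ y : Fin p → ℝ, P *ᵥ y = y - (κ * (b ⬝ᵥ y)) • b := fun y => by
    rw [hPdef, sub_mulVec, one_mulVec, smul_mulVec, hEdef, vecMulVec_mulVec', smul_smul]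
  have hPvm : ∀ x : Fin p → ℝ, x ᵥ* P = x - (κ * (b ⬝ᵥ x)) • b := fun x => by
    have hPsym : Pᵀ = P := by
      rw [hPdef, Matrix.transpose_sub, Matrix.transpose_one, Matrix.transpose_smul, hEdef]
      congr 2
      ext i j; simp [vecMulVec_apply, mul_comm]
    rw [← hPsym, vecMul_transpose, hPmv]
  have hNdot : ∀ x y : Fin p → ℝ, x ⬝ᵥ NN *ᵥ y
      = (x - (κ * (b ⬝ᵥ x)) • b) ⬝ᵥ M *ᵥ (y - (κ * (b ⬝ᵥ y)) • b) := by
    intro x y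
    rw [hNNdef, ← Matrix.mulVec_mulVec, ← Matrix.mulVec_mulVec, dotProduct_mulVec x P,
      hPvm, hPmv]
  -- piece 1
  have eq1 : a ⬝ᵥ D.mulVec a
      = s1 - κ * k * s1 - κ * k * s1 + (κ * k) * (κ * k) * s1 := by
    have h : a ⬝ᵥ D.mulVec a = b ⬝ᵥ NN *ᵥ b := by
      rw [hDN, ← Matrix.mulVec_mulVec, ← Matrix.mulVec_mulVec, hWb, dotProduct_mulVec a W, hvaW]
    rw [h, hNdot, hbil, hs1def, hkdef]
  -- piece 2 : trace
  have eq2 : (W⁻¹ * D * W⁻¹ * U).trace = t - κ * s2 - κ * s2 + κ * κ * (s1 * u₀) := by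
    have hcan : W⁻¹ * D * W⁻¹ * U = NN * U := by
      rw [hWinv, hDN]
      have h : Winv * (W * NN * W) * Winv * U = (Winv * W) * (NN * ((W * Winv) * U)) := by
        simp only [Matrix.mul_assoc]
      rw [h, hW1, hW2, one_mul, one_mul]
    have hexp : NN * U = M * U - κ • (E * (M * U)) - κ • (M * (E * U))
        + (κ * κ) • (E * (M * (E * U))) := by
      rw [hNNdef, hPdef]
      simp only [sub_mul, mul_sub, one_mul, mul_one, Matrix.smul_mul, Matrix.mul_smul,
        smul_smul, smul_sub, Matrix.mul_assoc]
      abel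
    have tr1 : (E * (M * U)).trace = s2 := by
      rw [hEdef, vecMulVec_mul', trace_vecMulVec', dotProduct_comm, ← dotProduct_mulVec,
        ← Matrix.mulVec_mulVec, hs2def, hgdef]
    have tr2 : (M * (E * U)).trace = s2 := by
      rw [hEdef, vecMulVec_mul', mul_vecMulVec', trace_vecMulVec', hUvm, ← hgdef,
        dotProduct_comm, hs2def, hS b g]
    have tr3 : (E * (M * (E * U))).trace = s1 * u₀ := by
      rw [hEdef, vecMulVec_mul' b b U, mul_vecMulVec', mul_vecMulVec', vecMulVec_mulVec',
        smul_vecMulVec', Matrix.trace_smul, trace_vecMulVec', hUvm, ← hgdef, smul_eq_mul,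
        hu₀def, hs1def, dotProduct_comm b (M *ᵥ b)]
    have htM : (M * U).trace = t := by rw [htdef, hMdef]
    rw [hcan, hexp, Matrix.trace_add, Matrix.trace_sub, Matrix.trace_sub, Matrix.trace_smul,
      Matrix.trace_smul, Matrix.trace_smul, tr1, tr2, tr3, htM]
    simp only [smul_eq_mul]
  -- piece 3
  have eq3 : a ⬝ᵥ (Z * D * Z).mulVec a
      = (s1 - s2 - s2 + s3)
        - (κ * (k - u₀)) * (s1 - s2) - (κ * (k - u₀)) * (s1 - s2)
        + (κ * (k - u₀)) * (κ * (k - u₀)) * s1 := by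
    set c : Fin p → ℝ := b - g with hcdef
    have hZb : Z *ᵥ b = c := by
      have : Z = 1 - U := by rw [hU]; abel
      rw [this, sub_mulVec, one_mulVec, hcdef, hgdef]
    have hbc : b ⬝ᵥ c = k - u₀ := by rw [hcdef, dotProduct_sub, hkdef, hu₀def]
    have h : a ⬝ᵥ (Z * D * Z).mulVec a = c ⬝ᵥ NN *ᵥ c := by
      rw [hDN]
      have hassoc : Z * (W * NN * W) * Z = (Z * W) * NN * (W * Z) := by
        simp only [Matrix.mul_assoc]
      have hZWd : Z * W = Matrix.diagonal (fun j => z j * w j) := by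
        rw [hZ, hW, diagonal_mul_diagonal]
      have hZW : Z * W = W * Z := by
        rw [hZWd, hW, hZ, diagonal_mul_diagonal]
        exact congrArg Matrix.diagonal (funext fun j => mul_comm (z j) (w j))
      have hWZa : (W * Z) *ᵥ a = c := by
        rw [← hZW, ← Matrix.mulVec_mulVec, hWb, hZb]
      have hZWsym : (Z * W)ᵀ = Z * W := by rw [hZWd, Matrix.diagonal_transpose]
      have hvaZW : a ᵥ* (Z * W) = c := by
        rw [← mulVec_transpose, hZWsym, ← Matrix.mulVec_mulVec, hWb, hZb]
      rw [hassoc, ← Matrix.mulVec_mulVec, hWZa, ← Matrix.mulVec_mulVec,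
        dotProduct_mulVec a (Z * W), hvaZW]
    have hexp : c ⬝ᵥ NN *ᵥ c
        = c ⬝ᵥ M *ᵥ c - (κ * (k - u₀)) * (c ⬝ᵥ M *ᵥ b) - (κ * (k - u₀)) * (b ⬝ᵥ M *ᵥ c)
          + (κ * (k - u₀)) * (κ * (k - u₀)) * s1 := by
      rw [hNdot, hbc, hbil]
    have e1 : c ⬝ᵥ M *ᵥ c = s1 - s2 - s2 + s3 := by
      rw [hcdef, mulVec_sub, dotProduct_sub, sub_dotProduct, sub_dotProduct, hs1def, hs2def,
        hs3def, hs2']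
      ring
    have e2 : c ⬝ᵥ M *ᵥ b = s1 - s2 := by
      rw [hcdef, sub_dotProduct, hs1def, hs2']
    have e3 : b ⬝ᵥ M *ᵥ c = s1 - s2 := by
      rw [hcdef, mulVec_sub, dotProduct_sub, hs1def, hs2def]
    rw [h, hexp, e1, e2, e3]
  -- piece RHS
  have eq5 : b ⬝ᵥ (U * W * Δ * W * U).mulVec b = s3 := by
    have hassoc : U * W * Δ * W * U = U * (M * U) := by
      rw [hMdef]; simp only [Matrix.mul_assoc]
    rw [hassoc, ← Matrix.mulVec_mulVec, dotProduct_mulVec b U, hUvm, ← hgdef,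
      ← Matrix.mulVec_mulVec, hgdef, ← hgdef, hs3def]
  rw [eq1, eq2, eq3, eq5, hκdef]
  field_simp
  ring
end

section
/- Let G_{α}(·,·) denote the noncentral gamma cdf G_α(x, y) = e^{-y} Σ_{n≥0} G_{α+n}(x) y^n / n!, where G_α is the regularized incomplete gamma function. For x, y > 0 with x ≠ y, lim_{ε→0⁺} G_α(ε^{-1} x, ε^{-1} y) = 0 if x < y and = 1 if x > y. -/
/-!
The noncentral gamma cdf is the Poisson mixture `G_α(X, Y) = 𝔼 G_{α+N}(X)`, `N ∼ Poisson(Y)`.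
The gamma cdf and the Poisson law obey Chernoff bounds of the same shape
`u ^ (-a) * exp ((u - 1) * t)`: `G_a(t)` is bounded by it for `u ≥ 1` and `1 - G_a(t)` for
`u ≤ 1`; `P(N < M)` for `u ≤ 1` and `P(N ≥ M)` for `u ≥ 1`, with `(a, t) = (M, Y)`.
Take `X = x / ε`, `Y = y / ε` and split the mixture at `M = c / ε`, `c` strictly between `x`
and `y`. If `x < y`, bound `G ≤ 1` below `M` and use the gamma bound above `M`; if `y < x`, do
the same for `1 - G` with the two sides exchanged. With `u = c / x` in the gamma bounds and
`u = c / y` in the Poisson bounds every term is a constant times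
`exp ((c - d - c log (c / d)) / ε)`, `d ∈ {x, y}`, and `c - d - c log (c / d) < 0` for `c ≠ d`.
-/

open Real Filter Topology

/-- The (regularized) gamma cdf with shape `α`. -/
noncomputable def Gcdf (α x : ℝ) : ℝ :=
  (∫ ξ in (0:ℝ)..x, ξ ^ (α - 1) * Real.exp (-ξ)) / Real.Gamma α

/-- The noncentral gamma cdf `G_α(x, y)`. -/
noncomputable def ncGcdf (α x y : ℝ) : ℝ :=
  Real.exp (-y) * ∑' n : ℕ, Gcdf (α + n) x * y ^ n / n.factorial

open MeasureTheory Set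

lemma integrableOn_rpow_mul_exp_neg_mul {a u : ℝ} (ha : 0 < a) (hu : 0 < u) :
    IntegrableOn (fun ξ : ℝ => ξ ^ (a - 1) * exp (-(u * ξ))) (Ioi 0) := by
  simpa using integrableOn_rpow_mul_exp_neg_mul_rpow (p := 1) (by linarith) one_pos hu

lemma integrableOn_rpow_mul_exp_neg {a : ℝ} (ha : 0 < a) :
    IntegrableOn (fun ξ : ℝ => ξ ^ (a - 1) * exp (-ξ)) (Ioi 0) := by
  simpa using integrableOn_rpow_mul_exp_neg_mul ha one_pos

lemma setIntegral_rpow_mul_exp_neg_le {a u b : ℝ} {S : Set ℝ} (ha : 0 < a) (hu : 0 < u)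
    (hS : MeasurableSet S) (hS0 : S ⊆ Ioi 0) (hb : ∀ ξ ∈ S, (u - 1) * ξ ≤ b) :
    ∫ ξ in S, ξ ^ (a - 1) * exp (-ξ) ≤ u ^ (-a) * exp b * Gamma a := by
  have hint := integrableOn_rpow_mul_exp_neg_mul ha hu
  calc ∫ ξ in S, ξ ^ (a - 1) * exp (-ξ)
      ≤ ∫ ξ in S, exp b * (ξ ^ (a - 1) * exp (-(u * ξ))) := by
        refine setIntegral_mono_on ((integrableOn_rpow_mul_exp_neg ha).mono_set hS0)
          ((hint.mono_set hS0).const_mul _) hS fun ξ hξ => ?_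
        rw [mul_left_comm, ← exp_add]
        gcongr
        · exact rpow_nonneg (hS0 hξ).le _
        · linarith [hb ξ hξ]
    _ = exp b * ∫ ξ in S, ξ ^ (a - 1) * exp (-(u * ξ)) := integral_const_mul _ _
    _ ≤ exp b * ∫ ξ in Ioi 0, ξ ^ (a - 1) * exp (-(u * ξ)) := by
        refine mul_le_mul_of_nonneg_left ?_ (exp_pos _).le
        refine setIntegral_mono_set hint ?_ hS0.eventuallyLE
        filter_upwards [ae_restrict_mem measurableSet_Ioi] with ξ hξ
        exact mul_nonneg (rpow_nonneg (le_of_lt hξ) _) (exp_pos _).le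
    _ = u ^ (-a) * exp b * Gamma a := by
        rw [integral_rpow_mul_exp_neg_mul_Ioi ha hu, one_div, inv_rpow hu.le, ← rpow_neg hu.le]
        ring

lemma Gcdf_eq_setIntegral_div {a t : ℝ} (ht : 0 ≤ t) :
    Gcdf a t = (∫ ξ in Ioc 0 t, ξ ^ (a - 1) * exp (-ξ)) / Gamma a := by
  rw [Gcdf, intervalIntegral.integral_of_le ht]

lemma one_sub_Gcdf_eq_setIntegral_div {a t : ℝ} (ha : 0 < a) (ht : 0 ≤ t) :
    1 - Gcdf a t = (∫ ξ in Ioi t, ξ ^ (a - 1) * exp (-ξ)) / Gamma a := by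
  have hint := integrableOn_rpow_mul_exp_neg ha
  have hsplit := intervalIntegral.integral_interval_add_Ioi hint (hint.mono_set (Ioi_subset_Ioi ht))
  rw [show ∫ ξ in Ioi 0, ξ ^ (a - 1) * exp (-ξ) = Gamma a by
    simpa using integral_rpow_mul_exp_neg_mul_Ioi ha one_pos] at hsplit
  have hΓ := (Gamma_pos_of_pos ha).ne'
  rw [Gcdf, eq_div_iff hΓ, sub_mul, div_mul_cancel₀ _ hΓ]
  linarith

lemma Gcdf_nonneg {a t : ℝ} (ha : 0 ≤ a) (ht : 0 ≤ t) : 0 ≤ Gcdf a t :=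
  div_nonneg (intervalIntegral.integral_nonneg ht fun _ hξ =>
    mul_nonneg (rpow_nonneg hξ.1 _) (exp_pos _).le) (Gamma_nonneg_of_nonneg ha)

lemma Gcdf_le_rpow_mul_exp {a t u : ℝ} (ha : 0 < a) (ht : 0 ≤ t) (hu : 1 ≤ u) :
    Gcdf a t ≤ u ^ (-a) * exp ((u - 1) * t) := by
  rw [Gcdf_eq_setIntegral_div ht, div_le_iff₀ (Gamma_pos_of_pos ha)]
  exact setIntegral_rpow_mul_exp_neg_le ha (by linarith) measurableSet_Ioc Ioc_subset_Ioi_self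
    fun ξ hξ => mul_le_mul_of_nonneg_left hξ.2 (by linarith)

lemma one_sub_Gcdf_le_rpow_mul_exp {a t u : ℝ} (ha : 0 < a) (ht : 0 ≤ t) (hu0 : 0 < u)
    (hu1 : u ≤ 1) : 1 - Gcdf a t ≤ u ^ (-a) * exp ((u - 1) * t) := by
  rw [one_sub_Gcdf_eq_setIntegral_div ha ht, div_le_iff₀ (Gamma_pos_of_pos ha)]
  exact setIntegral_rpow_mul_exp_neg_le ha hu0 measurableSet_Ioi (Ioi_subset_Ioi ht)
    fun ξ hξ => mul_le_mul_of_nonpos_left (le_of_lt hξ) (by linarith)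

lemma Gcdf_le_one {a t : ℝ} (ha : 0 < a) (ht : 0 ≤ t) : Gcdf a t ≤ 1 := by
  simpa using Gcdf_le_rpow_mul_exp ha ht le_rfl

/-- The mean of `f N` for a Poisson random variable `N` with parameter `Y`. -/
noncomputable def poissonMix (f : ℕ → ℝ) (Y : ℝ) : ℝ :=
  exp (-Y) * ∑' n : ℕ, f n * Y ^ n / n.factorial

lemma ncGcdf_eq_poissonMix (α X Y : ℝ) :
    ncGcdf α X Y = poissonMix (fun n => Gcdf (α + n) X) Y := rfl

lemma hasSum_pow_div_factorial (x : ℝ) : HasSum (fun n : ℕ => x ^ n / n.factorial) (exp x) := by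
  rw [exp_eq_exp_ℝ]
  exact NormedSpace.expSeries_div_hasSum_exp x

section poissonMix

variable {f : ℕ → ℝ} {Y A B r : ℝ}

lemma mul_pow_div_factorial_le {a : ℝ} {n : ℕ} (hY : 0 ≤ Y) (ha : a ≤ A * r ^ n + B) :
    a * Y ^ n / n.factorial ≤ A * ((r * Y) ^ n / n.factorial) + B * (Y ^ n / n.factorial) :=
  calc a * Y ^ n / n.factorial ≤ (A * r ^ n + B) * Y ^ n / n.factorial := by gcongr
    _ = _ := by ring

lemma summable_mul_pow_div_factorial (hY : 0 ≤ Y) (hf0 : ∀ n, 0 ≤ f n)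
    (hf : ∀ n, f n ≤ A * r ^ n + B) :
    Summable fun n : ℕ => f n * Y ^ n / n.factorial :=
  Summable.of_nonneg_of_le (fun n => by have := hf0 n; positivity)
    (fun n => mul_pow_div_factorial_le hY (hf n))
    (((hasSum_pow_div_factorial (r * Y)).mul_left A).add
      ((hasSum_pow_div_factorial Y).mul_left B)).summable

lemma poissonMix_nonneg (hY : 0 ≤ Y) (hf0 : ∀ n, 0 ≤ f n) : 0 ≤ poissonMix f Y :=
  mul_nonneg (exp_pos _).le (tsum_nonneg fun n => by have := hf0 n; positivity)

lemma poissonMix_le (hY : 0 ≤ Y) (hf0 : ∀ n, 0 ≤ f n) (hf : ∀ n, f n ≤ A * r ^ n + B) :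
    poissonMix f Y ≤ A * exp ((r - 1) * Y) + B := by
  have hle : ∑' n : ℕ, f n * Y ^ n / n.factorial ≤ A * exp (r * Y) + B * exp Y :=
    hasSum_le (fun n => mul_pow_div_factorial_le hY (hf n))
      (summable_mul_pow_div_factorial hY hf0 hf).hasSum
      (((hasSum_pow_div_factorial (r * Y)).mul_left A).add
        ((hasSum_pow_div_factorial Y).mul_left B))
  calc poissonMix f Y ≤ exp (-Y) * (A * exp (r * Y) + B * exp Y) :=
        mul_le_mul_of_nonneg_left hle (exp_pos _).le
    _ = A * exp ((r - 1) * Y) + B := by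
        rw [mul_add, mul_left_comm, ← exp_add, mul_left_comm, ← exp_add, neg_add_cancel, exp_zero]
        ring_nf

lemma one_sub_poissonMix (hf : Summable fun n : ℕ => f n * Y ^ n / n.factorial) :
    1 - poissonMix f Y = poissonMix (fun n => 1 - f n) Y := by
  have hsum := ((hasSum_pow_div_factorial Y).sub hf.hasSum).tsum_eq
  simp only [poissonMix, sub_mul, sub_div, one_mul, hsum, mul_sub, ← exp_add, neg_add_cancel,
    exp_zero]

end poissonMix

section ncGcdf

variable {α X Y r u : ℝ}

lemma ncGcdf_nonneg (hα : 0 < α) (hX : 0 ≤ X) (hY : 0 ≤ Y) : 0 ≤ ncGcdf α X Y :=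
  poissonMix_nonneg hY fun n => Gcdf_nonneg (by positivity) hX

lemma ncGcdf_le_one (hα : 0 < α) (hX : 0 ≤ X) (hY : 0 ≤ Y) : ncGcdf α X Y ≤ 1 := by
  simpa [ncGcdf_eq_poissonMix] using poissonMix_le hY (A := 0) (r := 0) (B := 1)
    (fun n => Gcdf_nonneg (by positivity) hX) fun n => by simpa using Gcdf_le_one (by positivity) hX

lemma ncGcdf_le (hα : 0 < α) (hX : 0 ≤ X) (hY : 0 ≤ Y) (hr0 : 0 < r) (hr1 : r ≤ 1) (hu : 1 ≤ u)
    (M : ℝ) :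
    ncGcdf α X Y ≤ r ^ (-M) * exp ((r - 1) * Y) + u ^ (-(α + M)) * exp ((u - 1) * X) := by
  refine poissonMix_le hY (fun n => Gcdf_nonneg (by positivity) hX) fun n => ?_
  -- `1 ≤ r ^ (n - M)` for `n < M` is the pointwise form of the Poisson Chernoff bound.
  rcases lt_or_ge (n : ℝ) M with hn | hn
  · calc Gcdf (α + n) X ≤ 1 := Gcdf_le_one (by positivity) hX
      _ ≤ r ^ (-M) * r ^ n := by
          rw [← rpow_natCast, ← rpow_add hr0]
          exact one_le_rpow_of_pos_of_le_one_of_nonpos hr0 hr1 (by linarith)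
      _ ≤ _ := le_add_of_nonneg_right (by positivity)
  · calc Gcdf (α + n) X ≤ u ^ (-(α + n)) * exp ((u - 1) * X) :=
          Gcdf_le_rpow_mul_exp (by positivity) hX hu
      _ ≤ u ^ (-(α + M)) * exp ((u - 1) * X) := by gcongr
      _ ≤ _ := le_add_of_nonneg_left (by positivity)

lemma one_sub_ncGcdf_le (hα : 0 < α) (hX : 0 ≤ X) (hY : 0 ≤ Y) (hr : 1 ≤ r) (hu0 : 0 < u)
    (hu1 : u ≤ 1) (M : ℝ) :
    1 - ncGcdf α X Y ≤ r ^ (-M) * exp ((r - 1) * Y) + u ^ (-(α + M)) * exp ((u - 1) * X) := by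
  have hG0 (n : ℕ) : 0 ≤ Gcdf (α + n) X := Gcdf_nonneg (by positivity) hX
  have hG1 (n : ℕ) : Gcdf (α + n) X ≤ 1 := Gcdf_le_one (by positivity) hX
  rw [ncGcdf_eq_poissonMix, one_sub_poissonMix (summable_mul_pow_div_factorial hY hG0
    (A := 0) (r := 0) (B := 1) (by simpa using hG1))]
  refine poissonMix_le hY (fun n => sub_nonneg.2 (hG1 n)) fun n => ?_
  rcases lt_or_ge (n : ℝ) M with hn | hn
  · calc 1 - Gcdf (α + n) X ≤ u ^ (-(α + n)) * exp ((u - 1) * X) :=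
          one_sub_Gcdf_le_rpow_mul_exp (by positivity) hX hu0 hu1
      _ ≤ u ^ (-(α + M)) * exp ((u - 1) * X) :=
          mul_le_mul_of_nonneg_right (rpow_le_rpow_of_exponent_ge hu0 hu1 (by linarith))
            (exp_pos _).le
      _ ≤ _ := le_add_of_nonneg_left (by positivity)
  · calc 1 - Gcdf (α + n) X ≤ 1 := by linarith [hG0 n]
      _ ≤ r ^ (-M) * r ^ n := by
          rw [← rpow_natCast, ← rpow_add (by linarith)]
          exact one_le_rpow hr (by linarith)
      _ ≤ _ := le_add_of_nonneg_right (by positivity)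

end ncGcdf

lemma sub_sub_mul_log_div_neg {c d : ℝ} (hc : 0 < c) (hd : 0 < d) (hcd : c ≠ d) :
    c - d - c * log (c / d) < 0 := by
  have h := log_lt_sub_one_of_pos (div_pos hd hc)
    (by rwa [ne_eq, div_eq_one_iff_eq hc.ne', eq_comm])
  have hlt := mul_lt_mul_of_pos_left h hc
  rw [mul_sub, mul_div_cancel₀ _ hc.ne', mul_one] at hlt
  rw [← inv_div d c, log_inv]
  linarith

lemma tendsto_rpow_mul_exp_nhdsGT_zero {c d : ℝ} (hc : 0 < c) (hd : 0 < d) (hcd : c ≠ d)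
    (β : ℝ) :
    Tendsto (fun ε : ℝ => (c / d) ^ (-(β + ε⁻¹ * c)) * exp ((c / d - 1) * (ε⁻¹ * d)))
      (𝓝[>] 0) (𝓝 0) := by
  have hrate (ε : ℝ) : (c / d) ^ (-(β + ε⁻¹ * c)) * exp ((c / d - 1) * (ε⁻¹ * d))
      = (c / d) ^ (-β) * exp (ε⁻¹ * (c - d - c * log (c / d))) := by
    rw [rpow_def_of_pos (div_pos hc hd), rpow_def_of_pos (div_pos hc hd), ← exp_add, ← exp_add]
    congr 1
    field_simp
    ring
  simp_rw [hrate]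
  simpa using ((tendsto_exp_atBot.comp (tendsto_inv_nhdsGT_zero.atTop_mul_const_of_neg
    (sub_sub_mul_log_div_neg hc hd hcd))).const_mul ((c / d) ^ (-β)))

lemma tendsto_ncGcdf_nhds_zero {α x y : ℝ} (hα : 0 < α) (hx : 0 < x) (hxy : x < y) :
    Tendsto (fun ε : ℝ => ncGcdf α (ε⁻¹ * x) (ε⁻¹ * y)) (𝓝[>] 0) (𝓝 0) := by
  obtain ⟨c, hxc, hcy⟩ := exists_between hxy
  have hc : 0 < c := hx.trans hxc
  have hy : 0 < y := hc.trans hcy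
  have hbound := (tendsto_rpow_mul_exp_nhdsGT_zero hc hy hcy.ne 0).add
    (tendsto_rpow_mul_exp_nhdsGT_zero hc hx hxc.ne' α)
  simp only [zero_add] at hbound
  refine squeeze_zero' ?_ ?_ hbound
  · filter_upwards [self_mem_nhdsWithin] with ε (hε : 0 < ε)
    exact ncGcdf_nonneg hα (by positivity) (by positivity)
  · filter_upwards [self_mem_nhdsWithin] with ε (hε : 0 < ε)
    exact ncGcdf_le hα (by positivity) (by positivity) (div_pos hc hy)
      ((div_le_one hy).2 hcy.le) ((one_le_div hx).2 hxc.le) (ε⁻¹ * c)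

lemma tendsto_ncGcdf_nhds_one {α x y : ℝ} (hα : 0 < α) (hy : 0 < y) (hyx : y < x) :
    Tendsto (fun ε : ℝ => ncGcdf α (ε⁻¹ * x) (ε⁻¹ * y)) (𝓝[>] 0) (𝓝 1) := by
  obtain ⟨c, hyc, hcx⟩ := exists_between hyx
  have hc : 0 < c := hy.trans hyc
  have hx : 0 < x := hc.trans hcx
  have hbound := (tendsto_rpow_mul_exp_nhdsGT_zero hc hy hyc.ne' 0).add
    (tendsto_rpow_mul_exp_nhdsGT_zero hc hx hcx.ne α)
  simp only [zero_add] at hbound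
  have hcompl : Tendsto (fun ε : ℝ => 1 - ncGcdf α (ε⁻¹ * x) (ε⁻¹ * y)) (𝓝[>] 0) (𝓝 0) := by
    refine squeeze_zero' ?_ ?_ hbound
    · filter_upwards [self_mem_nhdsWithin] with ε (hε : 0 < ε)
      exact sub_nonneg.2 (ncGcdf_le_one hα (by positivity) (by positivity))
    · filter_upwards [self_mem_nhdsWithin] with ε (hε : 0 < ε)
      exact one_sub_ncGcdf_le hα (by positivity) (by positivity) ((one_le_div hy).2 hyc.le)
        (div_pos hc hx) ((div_le_one hx).2 hcx.le) (ε⁻¹ * c)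
  simpa using (tendsto_const_nhds (x := (1 : ℝ))).sub hcompl

theorem stmt5_general (α x y : ℝ) (hα : 0 < α) (hx : 0 < x) (hy : 0 < y) :
    (x < y → Tendsto (fun ε : ℝ => ncGcdf α (ε⁻¹ * x) (ε⁻¹ * y)) (𝓝[>] 0) (𝓝 0)) ∧
    (y < x → Tendsto (fun ε : ℝ => ncGcdf α (ε⁻¹ * x) (ε⁻¹ * y)) (𝓝[>] 0) (𝓝 1)) :=
  ⟨tendsto_ncGcdf_nhds_zero hα hx, tendsto_ncGcdf_nhds_one hα hy⟩

theorem stmt5 (α x y : ℝ) (hα : 0 < α) (hx : 0 < x) (hy : 0 < y) (hxy : x ≠ y) :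
    (x < y → Tendsto (fun ε : ℝ => ncGcdf α (ε⁻¹ * x) (ε⁻¹ * y)) (𝓝[>] 0) (𝓝 0)) ∧
    (y < x → Tendsto (fun ε : ℝ => ncGcdf α (ε⁻¹ * x) (ε⁻¹ * y)) (𝓝[>] 0) (𝓝 1)) :=
  stmt5_general α x y hα hx hy
end

section
/- For α > 0, x > 0, and complex y with y ≠ 1, the series Σ_{n=0}^∞ G_{α+n}(x) y^n converges and equals (1 − y)^{-1} (G_α(x) − y^{1-α} e^{x(y−1)} G_α(x y)), where G_α is the regularized incomplete gamma function extended to complex arguments via the principal branch. -/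
open Complex

/-- The regularized incomplete gamma function `G_α(z) = γ(α,z)/Γ(α)` extended to `ℂ`
(cut along the negative real axis), via the entire function `z^{-α}γ(α,z)` and the
principal value of `z^α`. -/
noncomputable def Greg (α : ℝ) (z : ℂ) : ℂ :=
  z ^ (α : ℂ) * (∑' n : ℕ, (-z) ^ n / ((n.factorial : ℂ) * ((α : ℂ) + n))) / Complex.Gamma α

/-!
Telescoping the recurrence `G_{β+1}(z) = G_β(z) - z^β e^{-z} / Γ(β+1)`, whose remainder
`G_{β+N}(z)` tends to `0`, gives `G_β(z) = z^β e^{-z} ∑ₖ zᵏ / Γ(β+k+1)`. Hence, with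
`c j = xʲ / Γ(α+j+1)`, the `n`-th term of the series is `x^α e^{-x} yⁿ ∑ₖ c (n+k)`. The double
series converges absolutely (`c` is the coefficient sequence of an entire function), so it can be
summed along the antidiagonals instead, giving `∑ⱼ c j (1 - y^{j+1}) / (1 - y)`. The part
carrying `y^{j+1}` is `G_α(xy)` again, up to the factor `y^{1-α} e^{x(y-1)}`, because
`(xy)^α = x^α y^α` for `x > 0`.
-/

open Filter Finset

lemma Real.Gamma_add_one_mul_factorial_le {β : ℝ} (hβ : 0 < β) (k : ℕ) :
    Real.Gamma (β + 1) * k.factorial ≤ Real.Gamma (β + k + 1) := by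
  induction k with
  | zero => simp
  | succ k ih =>
    have hpos : 0 < β + k + 1 := by positivity
    rw [show β + ↑(k + 1) + 1 = (β + k + 1) + 1 by push_cast; ring,
      Real.Gamma_add_one hpos.ne', Nat.factorial_succ, Nat.cast_mul, ← mul_assoc,
      mul_comm _ ((k + 1 : ℕ) : ℝ), mul_assoc]
    gcongr
    push_cast; linarith

lemma Complex.norm_Gamma_ofReal_of_pos {s : ℝ} (hs : 0 < s) :
    ‖Complex.Gamma s‖ = Real.Gamma s := by
  rw [Complex.Gamma_ofReal, Complex.norm_real, Real.norm_of_nonneg (Real.Gamma_pos_of_pos hs).le]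

lemma Complex.norm_Gamma_add_nat_add_one {β : ℝ} (hβ : 0 < β) (k : ℕ) :
    ‖Complex.Gamma (β + k + 1)‖ = Real.Gamma (β + k + 1) := by
  rw [← Complex.norm_Gamma_ofReal_of_pos (by positivity : 0 < β + k + 1)]
  push_cast; rfl

lemma Real.summable_pow_div_Gamma {β : ℝ} (hβ : 0 < β) (r : ℝ) :
    Summable fun k : ℕ => r ^ k / Real.Gamma (β + k + 1) := by
  refine Summable.of_norm_bounded
    ((Real.summable_pow_div_factorial |r|).div_const (Real.Gamma (β + 1))) fun k => ?_
  rw [norm_div, norm_pow, Real.norm_eq_abs, Real.norm_of_nonneg (Real.Gamma_pos_of_pos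
    (by positivity)).le, div_div, mul_comm]
  gcongr
  exact Real.Gamma_add_one_mul_factorial_le hβ k

lemma Complex.summable_pow_div_Gamma {β : ℝ} (hβ : 0 < β) (z : ℂ) :
    Summable fun k : ℕ => z ^ k / Complex.Gamma (β + k + 1) := by
  refine Summable.of_norm ((Real.summable_pow_div_Gamma hβ ‖z‖).congr fun k => ?_)
  rw [norm_div, norm_pow, Complex.norm_Gamma_add_nat_add_one hβ]

/-- The series `z^{-β} γ(β, z)` inside `Greg`. -/
noncomputable def incGammaSeries (β : ℝ) (z : ℂ) : ℂ :=
  ∑' n : ℕ, (-z) ^ n / ((n.factorial : ℂ) * ((β : ℂ) + n))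

lemma Greg_eq (β : ℝ) (z : ℂ) : Greg β z = z ^ (β : ℂ) * incGammaSeries β z / Complex.Gamma β :=
  rfl

section IncGammaSeries

variable {β : ℝ}

lemma norm_incGammaSeries_term_le (hβ : 0 < β) (z : ℂ) (n : ℕ) :
    ‖(-z) ^ n / ((n.factorial : ℂ) * ((β : ℂ) + n))‖ ≤ ‖z‖ ^ n / n.factorial / β := by
  have hβn : ((β : ℂ) + n) = ((β + n : ℝ) : ℂ) := by push_cast; rfl
  rw [norm_div, norm_pow, norm_neg, norm_mul, Complex.norm_natCast, hβn, Complex.norm_real,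
    Real.norm_of_nonneg (by positivity), ← div_div]
  gcongr
  simp

lemma hasSum_incGammaSeries (hβ : 0 < β) (z : ℂ) :
    HasSum (fun n : ℕ => (-z) ^ n / ((n.factorial : ℂ) * ((β : ℂ) + n))) (incGammaSeries β z) :=
  (Summable.of_norm_bounded ((Real.summable_pow_div_factorial ‖z‖).div_const β)
    (norm_incGammaSeries_term_le hβ z)).hasSum

lemma norm_incGammaSeries_le (hβ : 0 < β) (z : ℂ) :
    ‖incGammaSeries β z‖ ≤ Real.exp ‖z‖ / β := by
  have hexp := (NormedSpace.expSeries_div_hasSum_exp ‖z‖).div_const β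
  rw [← Real.exp_eq_exp_ℝ] at hexp
  exact (hasSum_incGammaSeries hβ z).norm_le_of_bounded hexp (norm_incGammaSeries_term_le hβ z)

/-- `z^{-β}` times `γ(β + 1, z) = β γ(β, z) - z^β e^{-z}`. -/
lemma incGammaSeries_recurrence (hβ : 0 < β) (z : ℂ) :
    β * incGammaSeries β z = Complex.exp (-z) + z * incGammaSeries (β + 1) z := by
  set t : ℕ → ℂ := fun n => (-z) ^ n / ((n.factorial : ℂ) * ((β : ℂ) + n))
  have hβn (n : ℕ) : (β : ℂ) + n ≠ 0 := by exact_mod_cast (by positivity : β + n ≠ 0)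
  have hshift : HasSum (fun n : ℕ => n * t n) (-z * incGammaSeries (β + 1) z) := by
    rw [← hasSum_nat_add_iff' 1, sum_range_one, Nat.cast_zero, zero_mul, sub_zero]
    refine ((hasSum_incGammaSeries (β := β + 1) (by positivity) z).mul_left (-z)).congr_fun
      fun m => ?_
    have hm := hβn (m + 1)
    simp only [t, Nat.factorial_succ]
    push_cast at hm ⊢
    rw [add_assoc (β : ℂ), add_comm 1 (m : ℂ)]
    field_simp
    ring
  have hexp : HasSum (fun n : ℕ => (-z) ^ n / n.factorial) (Complex.exp (-z)) := by
    rw [Complex.exp_eq_exp_ℂ]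
    exact NormedSpace.expSeries_div_hasSum_exp (-z)
  have hterm (n : ℕ) : β * t n = (-z) ^ n / n.factorial - n * t n := by
    have := hβn n
    simp only [t]
    field_simp
    ring
  have := (hexp.sub hshift).congr_fun hterm
  rw [((hasSum_incGammaSeries hβ z).mul_left (β : ℂ)).unique this]
  ring

end IncGammaSeries

lemma Complex.ofReal_mul_cpow {x : ℝ} (hx : 0 < x) {y : ℂ} (hy : y ≠ 0) (s : ℂ) :
    ((x : ℂ) * y) ^ s = (x : ℂ) ^ s * y ^ s := by
  have hxc : (x : ℂ) ≠ 0 := by exact_mod_cast hx.ne'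
  rw [Complex.cpow_def_of_ne_zero (mul_ne_zero hxc hy), Complex.cpow_def_of_ne_zero hxc,
    Complex.cpow_def_of_ne_zero hy, Complex.log_ofReal_mul hx hy, add_mul, Complex.exp_add,
    Complex.ofReal_log hx.le]

lemma Complex.cpow_ofReal_add_natCast {β : ℝ} (hβ : 0 < β) (z : ℂ) (N : ℕ) :
    z ^ (((β + N : ℝ)) : ℂ) = z ^ (β : ℂ) * z ^ N := by
  rcases eq_or_ne z 0 with rfl | hz
  · rw [Complex.zero_cpow (by exact_mod_cast (by positivity : β + N ≠ 0)),
      Complex.zero_cpow (by exact_mod_cast hβ.ne'), zero_mul]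
  · push_cast
    rw [Complex.cpow_add _ _ hz, Complex.cpow_natCast]

section Greg

variable {β : ℝ}

lemma Greg_zero_right (hβ : 0 < β) : Greg β 0 = 0 := by
  rw [Greg_eq, Complex.zero_cpow (by exact_mod_cast hβ.ne'), zero_mul, zero_div]

lemma Greg_add_one (hβ : 0 < β) (z : ℂ) :
    Greg (β + 1) z = Greg β z - z ^ (β : ℂ) * Complex.exp (-z) / Complex.Gamma (β + 1) := by
  have hβc : (β : ℂ) ≠ 0 := by exact_mod_cast hβ.ne'
  rcases eq_or_ne z 0 with rfl | hz
  · rw [Greg_zero_right (by positivity), Greg_zero_right hβ, Complex.zero_cpow hβc]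
    simp
  · have hS : z * incGammaSeries (β + 1) z = β * incGammaSeries β z - Complex.exp (-z) := by
      rw [incGammaSeries_recurrence hβ z]; ring
    rw [Greg_eq, Greg_eq, Complex.ofReal_add, Complex.ofReal_one, Complex.cpow_add _ _ hz,
      Complex.cpow_one, Complex.Gamma_add_one _ hβc, mul_assoc (z ^ (β : ℂ)), hS]
    field_simp

lemma norm_Greg_le (hβ : 0 < β) (z : ℂ) :
    ‖Greg β z‖ ≤ ‖z‖ ^ β * Real.exp ‖z‖ / Real.Gamma (β + 1) := by
  rw [Greg_eq, norm_div, norm_mul, Complex.norm_cpow_real, Complex.norm_Gamma_ofReal_of_pos hβ,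
    Real.Gamma_add_one hβ.ne']
  calc _ ≤ ‖z‖ ^ β * (Real.exp ‖z‖ / β) / Real.Gamma β := by
        gcongr
        exact norm_incGammaSeries_le hβ z
    _ = _ := by field_simp

lemma Greg_sub_Greg_add_nat (hβ : 0 < β) (z : ℂ) (N : ℕ) :
    Greg β z - Greg (β + N) z =
      z ^ (β : ℂ) * Complex.exp (-z) * ∑ k ∈ range N, z ^ k / Complex.Gamma (β + k + 1) := by
  induction N with
  | zero => simp
  | succ N ih =>
    rw [Nat.cast_succ, ← add_assoc, Greg_add_one (by positivity), sum_range_succ, mul_add, ← ih,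
      Complex.cpow_ofReal_add_natCast hβ]
    push_cast
    ring

lemma tendsto_Greg_add_nat (hβ : 0 < β) (z : ℂ) :
    Tendsto (fun N : ℕ => Greg (β + N) z) atTop (nhds 0) := by
  have hbound (N : ℕ) : ‖Greg (β + N) z‖ ≤
      ‖z‖ ^ β * Real.exp ‖z‖ * ‖z ^ N / Complex.Gamma (β + N + 1)‖ := by
    rw [norm_div, norm_pow, Complex.norm_Gamma_add_nat_add_one hβ, mul_div_assoc',
      mul_right_comm, ← Real.rpow_natCast, ← Real.rpow_add' (norm_nonneg z) (by positivity)]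
    exact norm_Greg_le (by positivity) z
  refine squeeze_zero_norm hbound ?_
  simpa using ((Complex.summable_pow_div_Gamma hβ z).tendsto_atTop_zero.norm).const_mul
    (‖z‖ ^ β * Real.exp ‖z‖)

lemma Greg_eq_mul_tsum (hβ : 0 < β) (z : ℂ) :
    Greg β z = z ^ (β : ℂ) * Complex.exp (-z) * ∑' k : ℕ, z ^ k / Complex.Gamma (β + k + 1) := by
  refine tendsto_nhds_unique ?_
    (((Complex.summable_pow_div_Gamma hβ z).hasSum.tendsto_sum_nat).const_mul _)
  simp_rw [← Greg_sub_Greg_add_nat hβ]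
  simpa using (tendsto_Greg_add_nat hβ z).const_sub (Greg β z)

lemma Greg_add_nat_eq_mul_tsum (hβ : 0 < β) (z : ℂ) (n : ℕ) :
    Greg (β + n) z = z ^ (β : ℂ) * Complex.exp (-z) *
      ∑' k : ℕ, z ^ (n + k) / Complex.Gamma (β + (n + k : ℕ) + 1) := by
  have hterm (k : ℕ) : z ^ (n + k) / Complex.Gamma (β + (n + k : ℕ) + 1) =
      z ^ n * (z ^ k / Complex.Gamma ((β + n : ℝ) + k + 1)) := by
    push_cast
    rw [pow_add, add_assoc (β : ℂ) n k, mul_div_assoc]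
  simp_rw [hterm, tsum_mul_left, Greg_eq_mul_tsum (β := β + n) (by positivity),
    Complex.cpow_ofReal_add_natCast hβ]
  ring

lemma cpow_mul_exp_mul_Greg_ofReal_mul (hβ : 0 < β) {x : ℝ} (hx : 0 < x) (y : ℂ) :
    y ^ (1 - β : ℂ) * Complex.exp (x * (y - 1)) * Greg β (x * y) =
      x ^ (β : ℂ) * Complex.exp (-x) * (y * ∑' k : ℕ, (x * y) ^ k / Complex.Gamma (β + k + 1)) := by
  rcases eq_or_ne y 0 with rfl | hy
  · simp [Greg_zero_right hβ]
  have hy1 : y ^ (1 - β : ℂ) * y ^ (β : ℂ) = y := by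
    rw [← Complex.cpow_add _ _ hy, sub_add_cancel, Complex.cpow_one]
  have hexp : Complex.exp (x * (y - 1)) * Complex.exp (-(x * y)) = Complex.exp (-x) := by
    rw [← Complex.exp_add]; ring_nf
  rw [Greg_eq_mul_tsum hβ, Complex.ofReal_mul_cpow hx hy]
  calc _ = (y ^ (1 - β : ℂ) * y ^ (β : ℂ)) *
        (Complex.exp (x * (y - 1)) * Complex.exp (-(x * y))) * x ^ (β : ℂ) *
          ∑' k : ℕ, (x * y) ^ k / Complex.Gamma (β + k + 1) := by ring
    _ = _ := by rw [hy1, hexp]; ring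

end Greg

/-- Summing the tails `∑ₖ c (n + k)` against `yⁿ` regroups, along the antidiagonals, into
`∑ⱼ c j (1 + y + ⋯ + yʲ)`. -/
lemma hasSum_tsum_nat_add_mul_pow {𝕜 : Type*} [NormedField 𝕜] [CompleteSpace 𝕜] {c : ℕ → 𝕜}
    (hc : ∀ r : ℝ, Summable fun j => ‖c j‖ * r ^ j) {y : 𝕜} (hy : y ≠ 1) :
    HasSum (fun n => (∑' k, c (n + k)) * y ^ n)
      ((1 - y)⁻¹ * (∑' j, c j - y * ∑' j, c j * y ^ j)) := by
  set G : ℕ × ℕ → 𝕜 := fun p => c (p.1 + p.2) * y ^ p.1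
  have hcs : Summable c := .of_norm (by simpa using hc 1)
  have hcy : Summable fun j => c j * y ^ j := .of_norm (by simpa using hc ‖y‖)
  have hG : Summable G := by
    set M := max 1 ‖y‖
    set B := ∑' j, ‖c j‖ * (2 * M) ^ j
    have hM : 1 ≤ M := le_max_left _ _
    refine Summable.of_norm_bounded (g := fun p : ℕ × ℕ => B * ((1 / 2) ^ p.1 * (1 / 2) ^ p.2))
      ((summable_geometric_two.mul_of_nonneg summable_geometric_two (fun _ => by positivity)
        (fun _ => by positivity)).mul_left B) fun ⟨n, k⟩ => ?_
    have hB : ‖c (n + k)‖ * (2 * M) ^ (n + k) ≤ B :=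
      (hc (2 * M)).le_tsum _ fun _ _ => by positivity
    calc ‖G (n, k)‖ = ‖c (n + k)‖ * ‖y‖ ^ n := by simp [G]
      _ ≤ ‖c (n + k)‖ * M ^ (n + k) := by
        gcongr
        exact (pow_le_pow_left₀ (norm_nonneg y) (le_max_right _ _) n).trans
          (pow_le_pow_right₀ hM (Nat.le_add_right n k))
      _ = ‖c (n + k)‖ * (2 * M) ^ (n + k) * ((1 / 2) ^ n * (1 / 2) ^ k) := by
        rw [← pow_add, mul_assoc, ← mul_pow]; ring_nf
      _ ≤ B * ((1 / 2) ^ n * (1 / 2) ^ k) := by gcongr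
  have hrows : HasSum (fun n => (∑' k, c (n + k)) * y ^ n) (∑' p, G p) :=
    hG.hasSum.prod_fiberwise fun n => by
      simp_rw [G, add_comm n]
      exact ((summable_nat_add_iff n).mpr hcs).hasSum.mul_right _
  have hdiag : HasSum (fun j => c j * ∑ i ∈ range (j + 1), y ^ i) (∑' p, G p) := by
    refine (Finset.HasAntidiagonal.sigmaAntidiagonalEquivProd.hasSum_iff.mpr hG.hasSum).sigma
      fun j => ?_
    convert hasSum_fintype _
    change _ = ∑ p : antidiagonal j, G p
    rw [Finset.sum_coe_sort (antidiagonal j) G, mul_sum,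
      ← Finset.Nat.sum_antidiagonal_eq_sum_range_succ (fun i _ => c j * y ^ i)]
    exact sum_congr rfl fun p hp => by rw [← mem_antidiagonal.mp hp]
  have hsum : HasSum (fun j => c j * ∑ i ∈ range (j + 1), y ^ i)
      ((1 - y)⁻¹ * (∑' j, c j - y * ∑' j, c j * y ^ j)) := by
    refine ((hcs.hasSum.sub (hcy.hasSum.mul_left y)).mul_left (1 - y)⁻¹).congr_fun fun j => ?_
    have h1y : 1 - y ≠ 0 := sub_ne_zero.mpr hy.symm
    rw [geom_sum_eq hy, ← neg_div_neg_eq, neg_sub, neg_sub]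
    field_simp
    ring
  rwa [hdiag.unique hsum] at hrows

theorem stmt6 (α x : ℝ) (hα : 0 < α) (hx : 0 < x) (y : ℂ) (hy : y ≠ 1) :
    HasSum (fun n : ℕ => Greg (α + n) (x : ℂ) * y ^ n)
      ((1 - y)⁻¹ *
        (Greg α (x : ℂ) -
          y ^ ((1 : ℂ) - (α : ℂ)) * Complex.exp ((x : ℂ) * (y - 1)) * Greg α ((x : ℂ) * y))) := by
  set c : ℕ → ℂ := fun j => (x : ℂ) ^ j / Complex.Gamma (α + j + 1)
  have hc (r : ℝ) : Summable fun j => ‖c j‖ * r ^ j := by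
    refine (Real.summable_pow_div_Gamma hα (x * r)).congr fun j => ?_
    rw [norm_div, norm_pow, Complex.norm_real, Real.norm_of_nonneg hx.le,
      Complex.norm_Gamma_add_nat_add_one hα, mul_pow]
    ring
  have hrows (n : ℕ) : Greg (α + n) (x : ℂ) * y ^ n =
      (x : ℂ) ^ (α : ℂ) * Complex.exp (-x) * ((∑' k, c (n + k)) * y ^ n) := by
    rw [Greg_add_nat_eq_mul_tsum hα, mul_assoc]
  have hrhs : Greg α (x : ℂ) - y ^ ((1 : ℂ) - (α : ℂ)) * Complex.exp ((x : ℂ) * (y - 1)) *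
      Greg α ((x : ℂ) * y) =
        (x : ℂ) ^ (α : ℂ) * Complex.exp (-x) * (∑' j, c j - y * ∑' j, c j * y ^ j) := by
    rw [cpow_mul_exp_mul_Greg_ofReal_mul hα hx, Greg_eq_mul_tsum hα, mul_sub]
    simp_rw [c, mul_pow, mul_div_right_comm]
  simp_rw [hrows]
  rw [hrhs, mul_left_comm]
  exact (hasSum_tsum_nat_add_mul_pow hc hy).mul_left _
end

section
/- Let Σ₀ be a p×p matrix, δ ∈ ℝ^p, t_{p+1} ∈ ℝ with 1 + t_{p+1} ≠ 0, T_p = diag(t_1,…,t_p), and Σ = [[Σ₀ + δδᵀ, δ],[δᵀ, 1]] the (p+1)×(p+1) block matrix, T = diag(t_1,…,t_{p+1}). If I_p + Σ₀T_p is invertible, then det(I_{p+1} + ΣT) = det(I_p + Σ₀T_p) · (1 + t_{p+1} + δᵀ T_p (I_p + Σ₀T_p)^{-1} δ). -/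
/-!
Writing `w = (δ, 1)`, the bordered matrix is a rank-one update of a block-diagonal one,
`Σ = diag(Σ₀, 0) + w wᵀ`, so `I + ΣT = diag(I + Σ₀T_p, 1) + w wᵀT`. The matrix determinant
lemma then gives `det(I + Σ₀T_p) · (1 + wᵀ T diag((I + Σ₀T_p)⁻¹, 1) w)`, and the quadratic form
splits along the blocks as `t_{p+1} + δᵀ T_p (I + Σ₀T_p)⁻¹ δ`.
-/

open Matrix

namespace Matrix

theorem det_add_vecMulVec {m R : Type*} [Fintype m] [DecidableEq m] [CommRing R]
    {A : Matrix m m R} (hA : IsUnit A.det) (u v : m → R) :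
    (A + vecMulVec u v).det = A.det * (1 + v ⬝ᵥ A⁻¹ *ᵥ u) := by
  rw [vecMulVec_eq Unit, det_add_replicateCol_mul_replicateRow hA, Matrix.mul_assoc,
    ← replicateCol_mulVec, det_one_add_mul_comm, det_one_add_replicateCol_mul_replicateRow]

theorem fromBlocks_add_vecMulVec_replicateCol_replicateRow {m R : Type*} [Semiring R]
    (A : Matrix m m R) (u v : m → R) :
    fromBlocks (A + vecMulVec u v) (replicateCol Unit u) (replicateRow Unit v) 1 =
      fromBlocks A 0 0 0 + vecMulVec (Sum.elim u 1) (Sum.elim v 1) := by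
  ext (i | i) (j | j) <;> simp [vecMulVec_apply]

end Matrix

theorem stmt14_general {p : ℕ} (S0 : Matrix (Fin p) (Fin p) ℝ) (δ : Fin p → ℝ)
    (tlast : ℝ) (Tp : Matrix (Fin p) (Fin p) ℝ)
    (S : Matrix (Fin p ⊕ Unit) (Fin p ⊕ Unit) ℝ)
    (hS : S = Matrix.fromBlocks (S0 + Matrix.vecMulVec δ δ) (Matrix.replicateCol Unit δ)
        (Matrix.replicateRow Unit δ) 1)
    (T : Matrix (Fin p ⊕ Unit) (Fin p ⊕ Unit) ℝ)
    (hT : T = Matrix.fromBlocks Tp 0 0 (tlast • 1))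
    (hA : IsUnit (1 + S0 * Tp).det) :
    (1 + S * T).det =
      (1 + S0 * Tp).det *
        (1 + tlast + δ ⬝ᵥ (Tp * (1 + S0 * Tp)⁻¹).mulVec δ) := by
  set M := 1 + S0 * Tp
  have hST : 1 + S * T =
      fromBlocks M 0 0 1 + vecMulVec (Sum.elim δ 1) (Sum.elim δ 1 ᵥ* T) := by
    rw [hS, fromBlocks_add_vecMulVec_replicateCol_replicateRow, add_mul, vecMulVec_mul,
      ← add_assoc, hT, fromBlocks_multiply, ← fromBlocks_one, fromBlocks_add]
    simp [M]
  have hdet : (fromBlocks M 0 0 (1 : Matrix Unit Unit ℝ)).det = M.det := by simp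
  have hinv : (fromBlocks M 0 0 (1 : Matrix Unit Unit ℝ))⁻¹ = fromBlocks M⁻¹ 0 0 1 := by
    rw [inv_fromBlocks_zero₂₁_of_isUnit_iff _ _ _
      (iff_of_true ((isUnit_iff_isUnit_det M).mpr hA) isUnit_one)]
    simp
  have hquad : (Sum.elim δ 1 ᵥ* T) ⬝ᵥ
      fromBlocks M⁻¹ 0 0 (1 : Matrix Unit Unit ℝ) *ᵥ Sum.elim δ 1 = tlast + δ ⬝ᵥ (Tp * M⁻¹) *ᵥ δ := by
    rw [hT, vecMul_fromBlocks, fromBlocks_mulVec, sumElim_dotProduct_sumElim, ← mulVec_mulVec,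
      dotProduct_mulVec]
    simp [vecMul, dotProduct, add_comm]
  rw [hST, det_add_vecMulVec (hdet ▸ hA), hdet, hinv, hquad, add_assoc]

theorem stmt14 {p : ℕ} (S0 : Matrix (Fin p) (Fin p) ℝ) (δ : Fin p → ℝ)
    (t : Fin p → ℝ) (tlast : ℝ) (htlast : 1 + tlast ≠ 0)
    (Tp : Matrix (Fin p) (Fin p) ℝ) (hTp : Tp = Matrix.diagonal t)
    (S : Matrix (Fin p ⊕ Unit) (Fin p ⊕ Unit) ℝ)
    (hS : S = Matrix.fromBlocks (S0 + Matrix.vecMulVec δ δ) (Matrix.replicateCol Unit δ)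
        (Matrix.replicateRow Unit δ) 1)
    (T : Matrix (Fin p ⊕ Unit) (Fin p ⊕ Unit) ℝ)
    (hT : T = Matrix.fromBlocks Tp 0 0 (tlast • 1))
    (hA : IsUnit (1 + S0 * Tp).det) :
    (1 + S * T).det =
      (1 + S0 * Tp).det *
        (1 + tlast + δ ⬝ᵥ (Tp * (1 + S0 * Tp)⁻¹).mulVec δ) :=
  stmt14_general S0 δ tlast Tp S hS T hT hA
end

section
/- Let α > 0, n ∈ ℕ, x > 0, and y₀ ∈ ℂ with |y₀| < r. Then (1/2πi) ∮_{|y|=r} (Σ_{m=0}^∞ g_{α+m}(x) y^m) · y^{α-1} (y − y₀)^{-(α+n)} dy = g_{α+n}(x) · exp(x y₀), where g_β(x) = x^{β-1} e^{-x}/Γ(β) and y^{α-1}(y − y₀)^{-(α+n)} is interpreted as y^{-n-1}(1 − y₀/y)^{-(α+n)}, expanded as a binomial series in powers of y₀/y. -/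
open Real Complex intervalIntegral
open Filter MeasureTheory
open scoped ENNReal NNReal

/-- The gamma density with shape `β`. -/
noncomputable def gdens (β x : ℝ) : ℝ := x ^ (β - 1) * Real.exp (-x) / Real.Gamma β

lemma gdens_pos {β x : ℝ} (hβ : 0 < β) (hx : 0 < x) : 0 < gdens β x := by
  unfold gdens
  positivity

lemma ratio_summable {f : ℕ → ℝ} (hf : ∀ k, 0 < f k) {L : ℝ} (hL : L < 1)
    (h : Tendsto (fun k => f (k + 1) / f k) atTop (nhds L)) : Summable f := by
  apply summable_of_ratio_test_tendsto_lt_one hL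
    (Filter.Eventually.of_forall fun k => (hf k).ne')
  convert h using 2 with k
  rw [Real.norm_eq_abs, Real.norm_eq_abs, abs_of_pos (hf _), abs_of_pos (hf _)]

lemma summable_A {α x : ℝ} (hα : 0 < α) (hx : 0 < x) {r : ℝ} (hr : 0 < r) :
    Summable fun m : ℕ => gdens (α + m) x * r ^ m := by
  have hpos : ∀ m : ℕ, 0 < gdens (α + m) x * r ^ m := fun m =>
    mul_pos (gdens_pos (by positivity) hx) (pow_pos hr m)
  apply ratio_summable hpos (L := 0) one_pos
  have hrat : ∀ m : ℕ, gdens (α + (m + 1 : ℕ)) x * r ^ (m + 1) /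
      (gdens (α + m) x * r ^ m) = x * r / (α + m) := by
    intro m
    have hG : Real.Gamma (α + (m + 1 : ℕ)) = (α + m) * Real.Gamma (α + m) := by
      push_cast
      rw [show α + (m + 1 : ℝ) = (α + m) + 1 by ring, Real.Gamma_add_one (by positivity)]
    have hX : x ^ (α + (m + 1 : ℕ) - 1) = x ^ (α + (m : ℝ) - 1) * x := by
      push_cast
      rw [show α + ((m : ℝ) + 1) - 1 = (α + m - 1) + 1 by ring, Real.rpow_add_one hx.ne']
    unfold gdens
    rw [hG, hX, pow_succ]
    have h1 : Real.Gamma (α + m) ≠ 0 := (Real.Gamma_pos_of_pos (by positivity)).ne'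
    have h2 : x ^ (α + (m : ℝ) - 1) ≠ 0 := (Real.rpow_pos_of_pos hx _).ne'
    have h3 : (α + (m : ℝ)) ≠ 0 := by positivity
    have h4 : r ^ m ≠ 0 := (pow_pos hr m).ne'
    field_simp
  simp only [hrat]
  have h1 : Tendsto (fun m : ℕ => (α + m : ℝ)) atTop atTop :=
    tendsto_atTop_add_const_left _ α tendsto_natCast_atTop_atTop
  have := h1.inv_tendsto_atTop.const_mul (x * r)
  simpa [div_eq_mul_inv] using this

lemma summable_C {α : ℝ} (hα : 0 < α) {q : ℝ} (hq0 : 0 ≤ q) (hq : q < 1) :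
    Summable fun k : ℕ => Real.Gamma (α + k) / (Real.Gamma α * k.factorial) * q ^ k := by
  set q' : ℝ := max q (1/2) with hq'
  have hq'0 : 0 < q' := lt_max_of_lt_right (by norm_num)
  have hq'1 : q' < 1 := max_lt hq (by norm_num)
  have hc : ∀ k : ℕ, 0 < Real.Gamma (α + k) / (Real.Gamma α * k.factorial) := by
    intro k
    have := Real.Gamma_pos_of_pos (show (0:ℝ) < α + k by positivity)
    have := Real.Gamma_pos_of_pos hα
    positivity
  have hsum' : Summable fun k : ℕ =>
      Real.Gamma (α + k) / (Real.Gamma α * k.factorial) * q' ^ k := by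
    apply ratio_summable (fun k => mul_pos (hc k) (pow_pos hq'0 k)) hq'1
    have hrat : ∀ k : ℕ, Real.Gamma (α + (k + 1 : ℕ)) / (Real.Gamma α * (k+1).factorial) * q' ^ (k+1) /
        (Real.Gamma (α + k) / (Real.Gamma α * k.factorial) * q' ^ k) =
        q' * ((α + k) / (k + 1)) := by
      intro k
      have hG : Real.Gamma (α + (k + 1 : ℕ)) = (α + k) * Real.Gamma (α + k) := by
        push_cast
        rw [show α + ((k : ℝ) + 1) = (α + k) + 1 by ring, Real.Gamma_add_one (by positivity)]
      rw [hG, Nat.factorial_succ, pow_succ]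
      have h1 : Real.Gamma (α + (k:ℝ)) ≠ 0 := (Real.Gamma_pos_of_pos (by positivity)).ne'
      have h2 : Real.Gamma α ≠ 0 := (Real.Gamma_pos_of_pos hα).ne'
      have h4 : (k.factorial : ℝ) ≠ 0 := Nat.cast_ne_zero.mpr k.factorial_ne_zero
      have h5 : q' ^ k ≠ 0 := (pow_pos hq'0 k).ne'
      push_cast
      field_simp
    simp only [hrat]
    have h1 : Tendsto (fun k : ℕ => (α + k : ℝ) / (k + 1)) atTop (nhds 1) := by
      have h2 : Tendsto (fun k : ℕ => ((k : ℝ) + 1)) atTop atTop :=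
        tendsto_atTop_add_const_right _ 1 tendsto_natCast_atTop_atTop
      have h3 := h2.inv_tendsto_atTop.const_mul (α - 1)
      have h4 : Tendsto (fun k : ℕ => (α - 1) * ((k:ℝ) + 1)⁻¹ + 1) atTop (nhds ((α-1) * 0 + 1)) :=
        h3.add tendsto_const_nhds
      convert h4 using 2 with k
      · have : ((k : ℝ) + 1) ≠ 0 := by positivity
        field_simp
        try ring
      · norm_num
    have := h1.const_mul q'
    simpa using this
  apply Summable.of_nonneg_of_le (fun k => by positivity) _ hsum'
  intro k
  exact mul_le_mul_of_nonneg_left (pow_le_pow_left₀ hq0 (le_max_left _ _) k) (hc k).le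

lemma integral_circle_exp (j : ℤ) :
    (∫ φ in (-Real.pi)..Real.pi, Complex.exp ((j : ℂ) * Complex.I * φ)) =
      if j = 0 then (2 * Real.pi : ℂ) else 0 := by
  by_cases hj : j = 0
  · simp [hj, two_mul]
  · rw [if_neg hj]
    have hc : (j : ℂ) * Complex.I ≠ 0 := by
      simp [Complex.ext_iff, hj]
    rw [integral_exp_mul_complex hc]
    have he : ∀ s : ℝ, Complex.exp ((j:ℂ) * Complex.I * s) = Complex.exp (Complex.I * s) ^ j := by
      intro s
      rw [← Complex.exp_int_mul]
      ring_nf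
    rw [he, he]
    have : Complex.exp (Complex.I * (-Real.pi : ℝ)) = (Complex.exp (Complex.I * (Real.pi:ℝ)))⁻¹ := by
      rw [← Complex.exp_neg]
      congr 1
      push_cast
      ring
    rw [this, inv_zpow, ← zpow_neg]
    have hpi : Complex.exp (Complex.I * (Real.pi : ℝ)) = -1 := by
      rw [mul_comm]; exact Complex.exp_pi_mul_I
    rw [hpi]
    have : ((-1 : ℂ)) ^ (-j) = (-1) ^ j := by
      rw [zpow_neg, ← inv_zpow]
      norm_num
    rw [this, sub_self, zero_div]

noncomputable def Caux (α : ℝ) (n : ℕ) (x : ℝ) (y₀ : ℂ) (r : ℝ) (p : ℕ × ℕ) : ℂ :=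
  ((gdens (α + p.1) x : ℝ) : ℂ) *
    ((Real.Gamma (α + n + p.2) / (Real.Gamma (α + n) * p.2.factorial) : ℝ) : ℂ) *
    y₀ ^ p.2 * Complex.I * (r : ℂ) ^ ((p.1 : ℤ) - n - p.2)

noncomputable def gaux (α : ℝ) (n : ℕ) (x : ℝ) (y₀ : ℂ) (r : ℝ) (p : ℕ × ℕ) (φ : ℝ) : ℂ :=
  Caux α n x y₀ r p * Complex.exp ((((p.1 : ℤ) - n - p.2 : ℤ) : ℂ) * Complex.I * φ)

theorem stmt18 (α : ℝ) (hα : 0 < α) (n : ℕ) (x : ℝ) (hx : 0 < x)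
    (y₀ : ℂ) (r : ℝ) (hr : ‖y₀‖ < r)
    (F : ℂ → ℂ)
    (hF : F = fun y : ℂ =>
      (∑' m : ℕ, (gdens (α + m) x : ℂ) * y ^ m) * y ^ (-(n : ℤ) - 1) *
        ∑' k : ℕ,
          ((Real.Gamma (α + n + k) / (Real.Gamma (α + n) * k.factorial) : ℝ) : ℂ) *
            (y₀ / y) ^ k) :
    (2 * Real.pi * Complex.I)⁻¹ *
        ∫ φ in (-Real.pi)..Real.pi,
          F (r * Complex.exp (φ * Complex.I)) *
            (Complex.I * r * Complex.exp (φ * Complex.I)) =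
      (gdens (α + n) x : ℂ) * Complex.exp (x * y₀) := by
  have hr0 : 0 < r := lt_of_le_of_lt (norm_nonneg y₀) hr
  have hαn : (0:ℝ) < α + n := by positivity
  have hga : ∀ m : ℕ, 0 < gdens (α + m) x := fun m => gdens_pos (by positivity) hx
  have hgc : ∀ k : ℕ, 0 < Real.Gamma (α + n + k) / (Real.Gamma (α + n) * k.factorial) := by
    intro k
    have := Real.Gamma_pos_of_pos (show (0:ℝ) < α + n + k by positivity)
    have := Real.Gamma_pos_of_pos hαn
    positivity
  have hSA : Summable fun m : ℕ => gdens (α + m) x * r ^ m := summable_A hα hx hr0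
  have hq0 : 0 ≤ ‖y₀‖ / r := by positivity
  have hq1 : ‖y₀‖ / r < 1 := (div_lt_one hr0).mpr hr
  have hSC : Summable fun k : ℕ =>
      Real.Gamma (α + n + k) / (Real.Gamma (α + n) * k.factorial) * (‖y₀‖ / r) ^ k := by
    have := summable_C hαn hq0 hq1
    convert this using 3 with k
  -- norm of Caux
  have habs : ∀ p : ℕ × ℕ, ‖Caux α n x y₀ r p‖ =
      (gdens (α + p.1) x * r ^ p.1) *
        ((Real.Gamma (α + n + p.2) / (Real.Gamma (α + n) * p.2.factorial)) *
          (‖y₀‖ / r) ^ p.2) * r ^ (-(n : ℤ)) := by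
    rintro ⟨m, k⟩
    simp only [Caux, norm_mul, Complex.norm_real, Real.norm_eq_abs, norm_pow, norm_zpow, Complex.norm_I,
      abs_of_pos (hga m), abs_of_pos (hgc k), abs_of_pos hr0, mul_one]
    rw [zpow_sub₀ hr0.ne', zpow_sub₀ hr0.ne', zpow_natCast, zpow_natCast, zpow_neg, zpow_natCast,
      div_pow]
    have h1 : (r:ℝ) ^ m ≠ 0 := (pow_pos hr0 m).ne'
    have h2 : (r:ℝ) ^ k ≠ 0 := (pow_pos hr0 k).ne'
    have h3 : (r:ℝ) ^ n ≠ 0 := (pow_pos hr0 n).ne'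
    field_simp
    simp only [zpow_natCast]
  have hnorm : Summable fun p : ℕ × ℕ => ‖Caux α n x y₀ r p‖ := by
    have hmul := (hSA.mul_of_nonneg hSC (fun m => (mul_pos (hga m) (pow_pos hr0 m)).le)
      (fun k => mul_nonneg (hgc k).le (pow_nonneg hq0 k))).mul_right (r ^ (-(n : ℤ)))
    exact hmul.congr fun p => (habs p).symm
  -- pointwise identity
  have hpt : ∀ φ : ℝ, F ((r : ℂ) * Complex.exp (φ * Complex.I)) *
      (Complex.I * r * Complex.exp (φ * Complex.I)) = ∑' p : ℕ × ℕ, gaux α n x y₀ r p φ := by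
    intro φ
    rw [hF]
    beta_reduce
    set y : ℂ := (r : ℂ) * Complex.exp (φ * Complex.I) with hy_def
    have hy : y ≠ 0 := mul_ne_zero (by exact_mod_cast hr0.ne') (Complex.exp_ne_zero _)
    have hay : ‖y‖ = r := by
      simp [hy_def, norm_mul, Complex.norm_exp, Complex.norm_real, abs_of_pos hr0]
    have hnA : Summable fun m : ℕ => ‖(gdens (α + m) x : ℂ) * y ^ m‖ := by
      convert hSA using 2 with m
      rw [norm_mul, norm_pow, Complex.norm_real, hay,
        Real.norm_eq_abs, abs_of_pos (hga m)]
    have hnC : Summable fun k : ℕ =>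
        ‖((Real.Gamma (α + n + k) / (Real.Gamma (α + n) * k.factorial) : ℝ) : ℂ) * (y₀ / y) ^ k‖ := by
      convert hSC using 2 with k
      rw [norm_mul, norm_pow, Complex.norm_real, Real.norm_eq_abs, abs_of_pos (hgc k),
        norm_div, hay]
    have hprod := tsum_mul_tsum_of_summable_norm hnA hnC
    calc ((∑' m : ℕ, (gdens (α + m) x : ℂ) * y ^ m) * y ^ (-(n : ℤ) - 1) *
          ∑' k : ℕ, ((Real.Gamma (α + n + k) / (Real.Gamma (α + n) * k.factorial) : ℝ) : ℂ) *
            (y₀ / y) ^ k) * (Complex.I * r * Complex.exp (φ * Complex.I))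
        = ((∑' m : ℕ, (gdens (α + m) x : ℂ) * y ^ m) *
            ∑' k : ℕ, ((Real.Gamma (α + n + k) / (Real.Gamma (α + n) * k.factorial) : ℝ) : ℂ) *
              (y₀ / y) ^ k) * (y ^ (-(n : ℤ) - 1) * (Complex.I * y)) := by
          rw [hy_def]; ring
      _ = ∑' p : ℕ × ℕ, ((gdens (α + p.1) x : ℂ) * y ^ p.1 *
            (((Real.Gamma (α + n + p.2) / (Real.Gamma (α + n) * p.2.factorial) : ℝ) : ℂ) *
              (y₀ / y) ^ p.2)) * (y ^ (-(n : ℤ) - 1) * (Complex.I * y)) := by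
          rw [hprod, tsum_mul_right]
      _ = ∑' p : ℕ × ℕ, gaux α n x y₀ r p φ := by
          apply tsum_congr
          rintro ⟨m, k⟩
          have key : y ^ (m : ℤ) * y ^ (-(n : ℤ) - 1) * y ^ (-(k : ℤ)) * y ^ (1 : ℤ) =
              y ^ ((m : ℤ) - n - k) := by
            rw [← zpow_add₀ hy, ← zpow_add₀ hy, ← zpow_add₀ hy]; congr 1; ring
          have hyj : y ^ ((m : ℤ) - n - k) =
              (r : ℂ) ^ ((m : ℤ) - n - k) *
                Complex.exp ((((m : ℤ) - n - k : ℤ) : ℂ) * Complex.I * φ) := by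
            rw [hy_def, mul_zpow, ← Complex.exp_int_mul]
            congr 2
            push_cast
            ring
          simp only [gaux, Caux]
          calc (gdens (α + m) x : ℂ) * y ^ m *
                (((Real.Gamma (α + n + k) / (Real.Gamma (α + n) * k.factorial) : ℝ) : ℂ) *
                  (y₀ / y) ^ k) * (y ^ (-(n : ℤ) - 1) * (Complex.I * y))
              = ((gdens (α + m) x : ℂ) *
                  ((Real.Gamma (α + n + k) / (Real.Gamma (α + n) * k.factorial) : ℝ) : ℂ) *
                  y₀ ^ k * Complex.I) *
                  (y ^ (m : ℤ) * y ^ (-(n : ℤ) - 1) * y ^ (-(k : ℤ)) * y ^ (1 : ℤ)) := by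
                rw [div_pow]
                simp only [zpow_neg, zpow_natCast, zpow_one]
                field_simp
            _ = ((gdens (α + m) x : ℂ) *
                  ((Real.Gamma (α + n + k) / (Real.Gamma (α + n) * k.factorial) : ℝ) : ℂ) *
                  y₀ ^ k * Complex.I) * y ^ ((m : ℤ) - n - k) := by rw [key]
            _ = _ := by rw [hyj]; ring
  simp only [hpt]
  -- interchange integral and sum
  have hle : -Real.pi ≤ Real.pi := by linarith [Real.pi_pos]
  have hexp1 : ∀ (j : ℤ) (φ : ℝ), ‖Complex.exp ((j : ℂ) * Complex.I * φ)‖ = 1 := by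
    intro j φ
    rw [Complex.norm_exp]
    simp
  have hmeas : ∀ p : ℕ × ℕ, AEStronglyMeasurable (fun φ : ℝ => gaux α n x y₀ r p φ)
      (volume.restrict (Set.Ioc (-Real.pi) Real.pi)) := by
    intro p
    exact (continuous_const.mul (Complex.continuous_exp.comp
      (continuous_const.mul Complex.continuous_ofReal))).aestronglyMeasurable
  have hfin : (∑' p : ℕ × ℕ, ∫⁻ φ in Set.Ioc (-Real.pi) Real.pi, ‖gaux α n x y₀ r p φ‖₊) ≠ ⊤ := by
    have hval : ∀ p : ℕ × ℕ, (∫⁻ φ in Set.Ioc (-Real.pi) Real.pi, ‖gaux α n x y₀ r p φ‖₊)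
        = (‖Caux α n x y₀ r p‖₊ : ℝ≥0∞) * ENNReal.ofReal (2 * Real.pi) := by
      intro p
      have h1 : ∀ φ : ℝ, (‖gaux α n x y₀ r p φ‖₊ : ℝ≥0∞) = (‖Caux α n x y₀ r p‖₊ : ℝ≥0∞) := by
        intro φ
        have : ‖gaux α n x y₀ r p φ‖ = ‖Caux α n x y₀ r p‖ := by
          rw [gaux, norm_mul, hexp1, mul_one]
        exact congrArg _ (NNReal.eq this)
      rw [lintegral_congr h1, setLIntegral_const, Real.volume_Ioc]
      congr 1
      ring_nf
    rw [tsum_congr hval, ENNReal.tsum_mul_right]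
    apply ENNReal.mul_ne_top _ ENNReal.ofReal_ne_top
    rw [ENNReal.tsum_coe_ne_top_iff_summable]
    have hs : Summable fun p : ℕ × ℕ => ‖Caux α n x y₀ r p‖ := by
      simpa using hnorm
    exact NNReal.summable_coe.mp (by simpa using hs)
  rw [integral_of_le hle, MeasureTheory.integral_tsum hmeas hfin]
  -- evaluate each integral
  have hint : ∀ p : ℕ × ℕ, (∫ φ in Set.Ioc (-Real.pi) Real.pi, gaux α n x y₀ r p φ) =
      Caux α n x y₀ r p * (if ((p.1 : ℤ) - n - p.2) = 0 then (2 * Real.pi : ℂ) else 0) := by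
    intro p
    rw [← integral_of_le hle]
    simp only [gaux]
    rw [intervalIntegral.integral_const_mul, integral_circle_exp]
  rw [tsum_congr hint]
  -- reindex along m = n + k
  have hre : (∑' p : ℕ × ℕ, Caux α n x y₀ r p *
        (if ((p.1 : ℤ) - n - p.2) = 0 then (2 * Real.pi : ℂ) else 0)) =
      ∑' k : ℕ, Caux α n x y₀ r (n + k, k) * (2 * Real.pi : ℂ) := by
    apply tsum_eq_tsum_of_ne_zero_bij (fun k => ((n + k.1, k.1) : ℕ × ℕ))
    · rintro ⟨k1, h1⟩ ⟨k2, h2⟩ h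
      simp only [Prod.mk.injEq] at h
      exact Subtype.ext h.2
    · rintro ⟨m, k⟩ hp
      simp only [Function.mem_support] at hp
      have hj : (m : ℤ) - n - k = 0 := by
        by_contra hj
        rw [if_neg hj, mul_zero] at hp
        exact hp rfl
      have hm : m = n + k := by omega
      rw [if_pos hj] at hp
      refine ⟨⟨k, ?_⟩, ?_⟩
      · simp only [Function.mem_support]
        rwa [← hm]
      · simp [hm]
    · rintro ⟨k, hk⟩
      have hj : ((n + k : ℕ) : ℤ) - n - k = 0 := by push_cast; ring
      rw [if_pos hj]
  rw [hre]
  -- simplify Caux at (n + k, k)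
  have hC : ∀ k : ℕ, Caux α n x y₀ r (n + k, k) * (2 * Real.pi : ℂ) =
      (2 * Real.pi * Complex.I) * (((gdens (α + (n + k)) x : ℝ) : ℂ) *
        ((Real.Gamma (α + n + k) / (Real.Gamma (α + n) * k.factorial) : ℝ) : ℂ) * y₀ ^ k) := by
    intro k
    have hj : (((n + k : ℕ) : ℤ) - n - k) = 0 := by push_cast; ring
    rw [Caux]
    simp only [hj, zpow_zero]
    push_cast
    ring
  rw [tsum_congr hC, tsum_mul_left, ← mul_assoc]
  -- final summation
  have h2pi : (2 * (Real.pi : ℂ) * Complex.I) ≠ 0 := by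
    refine mul_ne_zero (mul_ne_zero two_ne_zero ?_) Complex.I_ne_zero
    exact_mod_cast Real.pi_ne_zero
  rw [inv_mul_cancel₀ h2pi, one_mul]
  have hreal : ∀ k : ℕ, gdens (α + ((n : ℝ) + k)) x *
      (Real.Gamma (α + n + k) / (Real.Gamma (α + n) * k.factorial)) =
      gdens (α + n) x * x ^ k / k.factorial := by
    intro k
    unfold gdens
    rw [show α + ((n : ℝ) + (k : ℝ)) = α + n + k from by ring]
    rw [show α + (n : ℝ) + (k : ℝ) - 1 = (α + (n : ℝ) - 1) + (k : ℝ) from by ring,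
      Real.rpow_add hx, Real.rpow_natCast]
    have hg1 : Real.Gamma (α + n + k) ≠ 0 :=
      (Real.Gamma_pos_of_pos (by positivity)).ne'
    have hg2 : Real.Gamma (α + n) ≠ 0 :=
      (Real.Gamma_pos_of_pos (by positivity)).ne'
    have hf : (k.factorial : ℝ) ≠ 0 := Nat.cast_ne_zero.mpr k.factorial_ne_zero
    field_simp
  have hterm : ∀ k : ℕ, ((gdens (α + (n + k)) x : ℝ) : ℂ) *
      ((Real.Gamma (α + n + k) / (Real.Gamma (α + n) * k.factorial) : ℝ) : ℂ) * y₀ ^ k =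
      ((gdens (α + n) x : ℝ) : ℂ) * (((x : ℂ) * y₀) ^ k / k.factorial) := by
    intro k
    calc ((gdens (α + (n + k)) x : ℝ) : ℂ) *
        ((Real.Gamma (α + n + k) / (Real.Gamma (α + n) * k.factorial) : ℝ) : ℂ) * y₀ ^ k
        = ((gdens (α + ((n : ℝ) + k)) x *
            (Real.Gamma (α + n + k) / (Real.Gamma (α + n) * k.factorial)) : ℝ) : ℂ) * y₀ ^ k := by
          push_cast
          ring
      _ = ((gdens (α + n) x * x ^ k / k.factorial : ℝ) : ℂ) * y₀ ^ k := by rw [hreal]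
      _ = ((gdens (α + n) x : ℝ) : ℂ) * (((x : ℂ) * y₀) ^ k / k.factorial) := by
          push_cast
          rw [mul_pow]
          ring
  rw [tsum_congr hterm, tsum_mul_left]
  congr 1
  rw [Complex.exp_eq_exp_ℂ, NormedSpace.exp_eq_tsum_div]
end

section
/- For α > 0, x > 0, and q ∈ ℂ, the limit as y₀ → 1 of (1 − y₀)^{-α} G*_α((1 − y₀) x, q/(1 − y₀)) equals (Γ(α+1))^{-1} x^α ₀F₁(α+1; q x), where G*_α(u,v) = Σ_{n=0}^∞ G_{α+n}(u) v^n / n!. -/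
open Complex Filter Topology

lemma my_cpow_mul_ofReal (z : ℂ) (hz : z ≠ 0) {r : ℝ} (hr : 0 < r) (w : ℂ) :
    (z * (r : ℂ)) ^ w = z ^ w * (r : ℂ) ^ w := by
  have hr' : (r : ℂ) ≠ 0 := by exact_mod_cast hr.ne'
  rw [Complex.cpow_def_of_ne_zero (mul_ne_zero hz hr'),
    Complex.cpow_def_of_ne_zero hz, Complex.cpow_def_of_ne_zero hr',
    Complex.log_mul_ofReal r hr z hz, ← Complex.ofReal_log hr.le, add_mul, Complex.exp_add]
  ring_nf

lemma my_gamma_prod (β : ℂ) (hβ : ∀ n : ℕ, β + n ≠ 0) (n : ℕ) :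
    Complex.Gamma (β + n) = Complex.Gamma β * ∏ i ∈ Finset.range n, (β + i) := by
  induction n with
  | zero => simp
  | succ n ih =>
    have h : β + (n + 1 : ℕ) = (β + n) + 1 := by push_cast; ring
    rw [h, Complex.Gamma_add_one _ (hβ n), ih, Finset.prod_range_succ]; ring

/-- `G*_α(u, v) = Σ_{n≥0} G_{α+n}(u) v^n / n!  (= e^v G_α(u,v))`. -/
noncomputable def Gstar (α : ℝ) (u v : ℂ) : ℂ :=
  ∑' n : ℕ, Greg (α + n) u * v ^ n / n.factorial

/-- The confluent hypergeometric limit function `₀F₁(β; z)` on `ℂ`. -/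
noncomputable def F01c (β : ℝ) (z : ℂ) : ℂ :=
  ∑' m : ℕ, z ^ m / ((∏ i ∈ Finset.range m, ((β : ℂ) + i)) * m.factorial)

set_option maxHeartbeats 1600000 in
theorem stmt19 (α x : ℝ) (hα : 0 < α) (hx : 0 < x) (q : ℂ) :
    Tendsto (fun y₀ : ℂ =>
        (1 - y₀) ^ (-(α : ℂ)) * Gstar α ((1 - y₀) * (x : ℂ)) (q / (1 - y₀)))
      (𝓝[≠] 1)
      (𝓝 ((Complex.Gamma (α + 1))⁻¹ * (x : ℂ) ^ (α : ℂ) * F01c (α + 1) (q * (x : ℂ)))) := by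
  have hxC : (x : ℂ) ≠ 0 := by exact_mod_cast hx.ne'
  have hne : ∀ n : ℕ, (α : ℂ) + n ≠ 0 := by
    intro n h
    have := congrArg Complex.re h
    simp at this
    nlinarith [Nat.cast_nonneg (α := ℝ) n]
  have hne1 : ∀ n : ℕ, ((α : ℂ) + 1) + n ≠ 0 := by
    intro n h
    have := congrArg Complex.re h
    simp at this
    nlinarith [Nat.cast_nonneg (α := ℝ) n]
  have hG : ∀ n : ℕ, Complex.Gamma ((α : ℂ) + n) ≠ 0 := fun n =>
    Complex.Gamma_ne_zero_of_re_pos (by simp; positivity)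
  set S : ℕ → ℂ → ℂ := fun n ε => ∑' m : ℕ,
      (-(ε * x)) ^ m / ((m.factorial : ℂ) * ((α : ℂ) + n + m)) with hS
  set a : ℕ → ℂ := fun n =>
      (x : ℂ) ^ (α : ℂ) * (q * x) ^ n / ((n.factorial : ℂ) * Complex.Gamma ((α : ℂ) + n)) with ha
  set F : ℂ → ℂ := fun ε => ∑' n : ℕ, a n * S n ε with hF
  have key : ∀ y₀ : ℂ, y₀ ≠ 1 →
      (1 - y₀) ^ (-(α : ℂ)) * Gstar α ((1 - y₀) * x) (q / (1 - y₀)) = F (1 - y₀) := by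
    intro y₀ hy
    set ε : ℂ := 1 - y₀ with hεdef
    have hε0 : ε ≠ 0 := sub_ne_zero.mpr (Ne.symm hy)
    have hεα : ε ^ (α : ℂ) ≠ 0 := by
      simp [Complex.cpow_eq_zero_iff, hε0]
    have hterm : ∀ n : ℕ, ε ^ (-(α:ℂ)) * (Greg (α + n) (ε * x) * (q / ε) ^ n / n.factorial)
        = a n * S n ε := by
      intro n
      have hcast : ((α + (n:ℕ) : ℝ) : ℂ) = (α : ℂ) + n := by push_cast; ring
      have hpow : (ε * (x:ℂ)) ^ ((α:ℂ) + (n:ℂ)) = ε ^ (α:ℂ) * (x:ℂ) ^ (α:ℂ) * (ε ^ n * (x:ℂ) ^ n) := by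
        rw [Complex.cpow_add _ _ (mul_ne_zero hε0 hxC), Complex.cpow_natCast,
          my_cpow_mul_ofReal ε hε0 hx, mul_pow]
      simp only [Greg, hcast, hpow, ha, hS]
      rw [Complex.cpow_neg, div_pow]
      have hfac : ((n.factorial : ℂ)) ≠ 0 := by exact_mod_cast n.factorial_ne_zero
      field_simp
      ring
    calc (1 - y₀) ^ (-(α : ℂ)) * Gstar α ((1 - y₀) * x) (q / (1 - y₀))
        = ∑' n : ℕ, ε ^ (-(α:ℂ)) * (Greg (α + n) (ε * x) * (q / ε) ^ n / n.factorial) := by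
          rw [Gstar, tsum_mul_left]
      _ = F ε := tsum_congr hterm
  have ha_succ : ∀ n : ℕ, a (n+1) = a n * (q * x / (((n:ℂ)+1) * ((α:ℂ)+n))) := by
    intro n
    have h1 : (α:ℂ) + ((n+1 : ℕ):ℂ) = ((α:ℂ)+n) + 1 := by push_cast; ring
    have hfac : ((n.factorial : ℂ)) ≠ 0 := by exact_mod_cast n.factorial_ne_zero
    have hn1 : ((n:ℂ)+1) ≠ 0 := Nat.cast_add_one_ne_zero n
    simp only [ha]
    rw [h1, Complex.Gamma_add_one _ (hne n), Nat.factorial_succ]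
    push_cast
    field_simp
    ring
  have hnormcast : ∀ n : ℕ, ‖(α:ℂ)+n‖ = α + n := by
    intro n
    have h : (α:ℂ)+n = ((α + n : ℝ) : ℂ) := by push_cast; ring
    rw [h, Complex.norm_real]
    exact abs_of_pos (by positivity)
  have hA : Summable (fun n : ℕ => ‖a n‖) := by
    apply summable_of_ratio_norm_eventually_le (r := 1/2) (by norm_num)
    filter_upwards [eventually_ge_atTop (max 1 ⌈‖q * (x:ℂ)‖⌉₊)] with n hn
    have hn1 : 1 ≤ n := le_of_max_le_left hn
    have hn2 : ‖q * (x:ℂ)‖ ≤ (n:ℝ) := le_trans (Nat.le_ceil _) (by exact_mod_cast le_of_max_le_right hn)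
    have hrat : ‖a (n+1)‖ = ‖a n‖ * (‖q * (x:ℂ)‖ / (((n:ℝ)+1) * (α + n))) := by
      have h : ((n:ℂ)+1) * ((α:ℂ)+n) = (((((n:ℝ)+1) * (α+n)) : ℝ) : ℂ) := by push_cast; ring
      have h2 : ‖(((((n:ℝ)+1) * (α+n)) : ℝ) : ℂ)‖ = ((n:ℝ)+1) * (α+n) := by
        rw [Complex.norm_real]; exact abs_of_pos (by positivity)
      rw [ha_succ n, h, norm_mul, norm_div (q * (x:ℂ)), h2]
    rw [norm_norm, norm_norm, hrat]
    have hpos : (0:ℝ) < ((n:ℝ)+1) * (α + n) := by positivity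
    have hhalf : ‖q * (x:ℂ)‖ / (((n:ℝ)+1) * (α + n)) ≤ 1/2 := by
      rw [div_le_iff₀ hpos]
      have hn1' : (1:ℝ) ≤ (n:ℝ) := by exact_mod_cast hn1
      nlinarith [norm_nonneg (q * (x:ℂ))]
    calc ‖a n‖ * (‖q * (x:ℂ)‖ / (((n:ℝ)+1) * (α + n))) ≤ ‖a n‖ * (1/2) :=
          mul_le_mul_of_nonneg_left hhalf (norm_nonneg _)
      _ = 1/2 * ‖a n‖ := by ring
  have hg : Summable (fun m : ℕ => x ^ m / (m.factorial * α)) := by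
    have := (Real.summable_pow_div_factorial x).div_const α
    simpa [div_div] using this
  set C : ℝ := ∑' m : ℕ, x ^ m / (m.factorial * α) with hC
  have htb : ∀ (n m : ℕ) (ε : ℂ), ‖ε‖ ≤ 1 →
      ‖(-(ε * (x:ℂ))) ^ m / ((m.factorial : ℂ) * ((α : ℂ) + n + m))‖ ≤ x ^ m / (m.factorial * α) := by
    intro n m ε hε
    rw [norm_div, norm_pow, norm_neg, norm_mul, norm_mul]
    have h1 : α ≤ ‖(α:ℂ)+n+m‖ := by
      refine le_trans ?_ (Complex.re_le_norm _)
      simp only [Complex.add_re, Complex.natCast_re, Complex.ofReal_re]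
      have : (0:ℝ) ≤ (n:ℝ) + m := by positivity
      linarith
    have h2 : (m.factorial : ℝ) * α ≤ ‖(m.factorial : ℂ)‖ * ‖(α:ℂ)+n+m‖ := by
      rw [Complex.norm_natCast]
      exact mul_le_mul_of_nonneg_left h1 (by positivity)
    have h3 : (‖ε‖ * ‖(x:ℂ)‖) ^ m ≤ x ^ m := by
      apply pow_le_pow_left₀ (by positivity)
      have hxn : ‖(x:ℂ)‖ = x := by rw [Complex.norm_real]; exact abs_of_pos hx
      rw [hxn]
      nlinarith [hx.le]
    exact div_le_div₀ (by positivity) h3 (by positivity) h2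
  have hSb : ∀ (n : ℕ) (ε : ℂ), ‖ε‖ ≤ 1 → ‖S n ε‖ ≤ C := by
    intro n ε hε
    exact tsum_of_norm_bounded hg.hasSum (fun m => htb n m ε hε)
  have hScont : ∀ n : ℕ, ContinuousOn (S n) (Metric.ball 0 1) := by
    intro n
    apply continuousOn_tsum (u := fun m => x ^ m / (m.factorial * α))
    · intro m
      exact (((continuous_id.mul continuous_const).neg.pow m).div_const _).continuousOn
    · exact hg
    · intro m ε hε
      exact htb n m ε (le_of_lt (mem_ball_zero_iff.mp hε))
  have hFcont : ContinuousOn F (Metric.ball 0 1) := by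
    apply continuousOn_tsum (u := fun n => ‖a n‖ * C)
    · intro n
      exact continuousOn_const.mul (hScont n)
    · exact hA.mul_right C
    · intro n ε hε
      rw [norm_mul]
      exact mul_le_mul_of_nonneg_left (hSb n ε (le_of_lt (mem_ball_zero_iff.mp hε))) (norm_nonneg _)
  have hFat : ContinuousAt F 0 := hFcont.continuousAt (Metric.ball_mem_nhds 0 one_pos)
  have hS0 : ∀ n : ℕ, S n 0 = ((α:ℂ) + n)⁻¹ := by
    intro n
    simp only [hS]
    rw [tsum_eq_single 0]
    · simp
    · intro m hm
      simp [zero_pow hm]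
  have hG1 : Complex.Gamma ((α:ℂ)+1) ≠ 0 := Complex.Gamma_ne_zero_of_re_pos (by simp; positivity)
  have htarget : (Complex.Gamma ((α:ℂ) + 1))⁻¹ * (x:ℂ) ^ (α:ℂ) * F01c (α + 1) (q * x) = F 0 := by
    rw [hF, F01c, ← tsum_mul_left]
    apply tsum_congr
    intro n
    rw [hS0 n]
    have hcast : ∀ i : ℕ, (((α + 1 : ℝ)) : ℂ) + i = ((α:ℂ)+1) + i := by intro i; push_cast; ring
    simp only [ha, hcast]
    set P : ℂ := ∏ i ∈ Finset.range n, (((α:ℂ)+1) + i) with hPdef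
    have hgam : ((α:ℂ)+n) * Complex.Gamma ((α:ℂ)+n) = Complex.Gamma ((α:ℂ)+1) * P := by
      have h1 := my_gamma_prod ((α:ℂ)+1) hne1 n
      have h2 : ((α:ℂ)+1) + n = ((α:ℂ)+n) + 1 := by ring
      rw [h2, Complex.Gamma_add_one _ (hne n)] at h1
      exact h1
    have hkey : Complex.Gamma ((α:ℂ)+1) * (P * (n.factorial:ℂ))
        = (n.factorial:ℂ) * Complex.Gamma ((α:ℂ)+n) * ((α:ℂ)+n) := by
      linear_combination (n.factorial:ℂ) * hgam.symm
    calc (Complex.Gamma ((α:ℂ)+1))⁻¹ * (x:ℂ)^(α:ℂ) * ((q*(x:ℂ))^n / (P * (n.factorial:ℂ)))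
        = (x:ℂ)^(α:ℂ) * (q*(x:ℂ))^n * (Complex.Gamma ((α:ℂ)+1) * (P * (n.factorial:ℂ)))⁻¹ := by
          simp only [div_eq_mul_inv, mul_inv]; ring
      _ = (x:ℂ)^(α:ℂ) * (q*(x:ℂ))^n * ((n.factorial:ℂ) * Complex.Gamma ((α:ℂ)+n) * ((α:ℂ)+n))⁻¹ := by
          rw [hkey]
      _ = (x:ℂ)^(α:ℂ) * (q*(x:ℂ))^n / ((n.factorial:ℂ) * Complex.Gamma ((α:ℂ)+n)) * ((α:ℂ)+n)⁻¹ := by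
          simp only [div_eq_mul_inv, mul_inv]; ring
  have hlim : Tendsto (fun y₀ : ℂ => 1 - y₀) (𝓝[≠] (1:ℂ)) (𝓝 0) := by
    have h : Tendsto (fun y₀ : ℂ => 1 - y₀) (𝓝 1) (𝓝 0) := by
      simpa using (continuous_sub_left (1:ℂ)).tendsto 1
    exact h.mono_left nhdsWithin_le_nhds
  have hmain : Tendsto (fun y₀ : ℂ => F (1 - y₀)) (𝓝[≠] (1:ℂ)) (𝓝 (F 0)) :=
    hFat.tendsto.comp hlim
  rw [htarget]
  apply hmain.congr'
  filter_upwards [self_mem_nhdsWithin] with y₀ hy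
  exact (key y₀ hy).symm
end
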